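/- arXiv:1205.5631 — 11 statements merged into one kernel-verified Lean document; each statement's English description precedes it below -/
import Mathlib

section
/- If x is a codominated vertex of a simple graph G (i.e., there exists a vertex y ≠ x with N_G[y] ⊆ N_G[x]), then x is a shedding vertex of G: for every independent set S in G − N_G[x], there is a vertex v ∈ N_G(x) such that S ∪ {v} is independent in G. -/
open SimpleGraph

variable {V : Type*}

/-- The closed neighborhood `N_G[x]` of a vertex. -/
def closedNbhd (G : SimpleGraph V) (x : V) : Set V := insert x (G.neighborSet x)

/-- `x` is codominated: some `y ≠ x` has `N_G[y] ⊆ N_G[x]`. -/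
def Codominated (G : SimpleGraph V) (x : V) : Prop :=
  ∃ y, y ≠ x ∧ closedNbhd G y ⊆ closedNbhd G x

/-- `S` is an independent set of `G`. -/
def IsIndep (G : SimpleGraph V) (S : Set V) : Prop :=
  ∀ ⦃u⦄, u ∈ S → ∀ ⦃v⦄, v ∈ S → ¬ G.Adj u v

/-- `x` is a shedding vertex of `G`: every independent set of `G - N_G[x]`
extends by a neighbor of `x`. -/
def SheddingVertex (G : SimpleGraph V) (x : V) : Prop :=
  ∀ S : Set V, S ⊆ (closedNbhd G x)ᶜ → IsIndep G S →
    ∃ v ∈ G.neighborSet x, IsIndep G (insert v S)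

/-- The closed neighborhood `N_G[I]` of a set of vertices. -/
def closedNbhdSet (G : SimpleGraph V) (I : Set V) : Set V :=
  I ∪ {v | ∃ u ∈ I, G.Adj u v}

/-- `x` is codominated in the subgraph of `G` induced on `A`. -/
def CodominatedOn (G : SimpleGraph V) (A : Finset V) (x : V) : Prop :=
  ∃ y ∈ A, y ≠ x ∧ ∀ z ∈ A, (z = y ∨ G.Adj y z) → (z = x ∨ G.Adj x z)

/-- The subgraph of `G` induced on `A` is codismantlable. -/
def CodismantlableOn (G : SimpleGraph V) [DecidableEq V] (A : Finset V) : Prop :=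
  (∀ x ∈ A, ∀ y ∈ A, ¬ G.Adj x y) ∨
    ∃ x, ∃ h : x ∈ A, CodominatedOn G A x ∧ CodismantlableOn G (A.erase x)
termination_by A.card
decreasing_by exact Finset.card_erase_lt_of_mem h

/-- `G` is codismantlable. -/
def Codismantlable (G : SimpleGraph V) [Fintype V] [DecidableEq V] : Prop :=
  CodismantlableOn G Finset.univ

/-- A maximal independent set of `G`. -/
def MaxIndep (G : SimpleGraph V) (S : Set V) : Prop :=
  IsIndep G S ∧ ∀ T : Set V, IsIndep G T → S ⊆ T → S = T

/-- `G` is well-covered: all maximal independent sets have the same size. -/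
def WellCovered (G : SimpleGraph V) : Prop :=
  ∀ S T : Set V, MaxIndep G S → MaxIndep G T → S.ncard = T.ncard

/-- `G` has no induced cycle of length `n`. -/
def CycleFree (G : SimpleGraph V) (n : ℕ) : Prop :=
  IsEmpty (cycleGraph n ↪g G)

/-- `G` is chordal: no induced cycle of length at least 4. -/
def Chordal (G : SimpleGraph V) : Prop :=
  ∀ n, 4 ≤ n → CycleFree G n

/-- `M` is a matching of `G` (as a set of edges). -/
def IsMatchingSet (G : SimpleGraph V) (M : Finset (Sym2 V)) : Prop :=
  (∀ e ∈ M, e ∈ G.edgeSet) ∧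
    ∀ e ∈ M, ∀ f ∈ M, e ≠ f → ∀ v : V, v ∈ e → v ∉ f

/-- `M` is an induced matching of `G`. -/
def IsInducedMatching (G : SimpleGraph V) (M : Finset (Sym2 V)) : Prop :=
  IsMatchingSet G M ∧
    ∀ e ∈ M, ∀ f ∈ M, e ≠ f → ∀ u : V, u ∈ e → ∀ v : V, v ∈ f → ¬ G.Adj u v

/-- The matching number `m(G)`. -/
noncomputable def matchNum (G : SimpleGraph V) : ℕ :=
  sSup {n | ∃ M : Finset (Sym2 V), IsMatchingSet G M ∧ M.card = n}

/-- The induced matching number `im(G)`. -/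
noncomputable def indMatchNum (G : SimpleGraph V) : ℕ :=
  sSup {n | ∃ M : Finset (Sym2 V), IsInducedMatching G M ∧ M.card = n}

open Classical in
/-- The vertices of `A` outside the closed neighborhood of `x`. -/
noncomputable def delNbhd (G : SimpleGraph V) [DecidableEq V] (A : Finset V) (x : V) : Finset V :=
  A.filter (fun z => ¬(z = x ∨ G.Adj x z))

/-- `x` is a shedding vertex of the subgraph of `G` induced on `A`. -/
def SheddingOn (G : SimpleGraph V) (A : Finset V) (x : V) : Prop :=
  ∀ S : Set V, S ⊆ ↑A → (∀ u ∈ S, ¬(u = x ∨ G.Adj x u)) → IsIndep G S →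
    ∃ v ∈ A, G.Adj x v ∧ IsIndep G (insert v S)

lemma delNbhd_ssubset (G : SimpleGraph V) [DecidableEq V] {A : Finset V} {x : V}
    (h : x ∈ A) : delNbhd G A x ⊂ A := by
  classical
  refine (Finset.ssubset_iff_of_subset (Finset.filter_subset _ _)).mpr ⟨x, h, ?_⟩
  simp [delNbhd]

/-- The subgraph of `G` induced on `A` is vertex decomposable. -/
noncomputable def VertexDecomposableOn (G : SimpleGraph V) [DecidableEq V] (A : Finset V) :
    Prop :=
  (∀ x ∈ A, ∀ y ∈ A, ¬ G.Adj x y) ∨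
    ∃ x, ∃ h : x ∈ A, SheddingOn G A x ∧ VertexDecomposableOn G (A.erase x) ∧
      VertexDecomposableOn G (delNbhd G A x)
termination_by A.card
decreasing_by
  · exact Finset.card_erase_lt_of_mem h
  · exact Finset.card_lt_card (delNbhd_ssubset G h)

/-- `G` is vertex decomposable. -/
noncomputable def VertexDecomposable (G : SimpleGraph V) [Fintype V] [DecidableEq V] : Prop :=
  VertexDecomposableOn G Finset.univ

/-- The restriction of `G` to `A` codismantles to its restriction to `B`. -/
inductive CodisTo (G : SimpleGraph V) [DecidableEq V] : Finset V → Finset V → Prop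
  | refl (A : Finset V) : CodisTo G A A
  | step {A B : Finset V} {x : V} (h : x ∈ A) (hc : CodominatedOn G A x)
      (ht : CodisTo G (A.erase x) B) : CodisTo G A B

/-- `L` is a codismantling sequence for the subgraph of `G` induced on `A`. -/
def CodisSeq (G : SimpleGraph V) [DecidableEq V] : Finset V → List V → Prop
  | A, [] => ∀ x ∈ A, ∀ y ∈ A, ¬ G.Adj x y
  | A, x :: xs => x ∈ A ∧ CodominatedOn G A x ∧ CodisSeq G (A.erase x) xs

/-- `C` is a vertex cover of `G`. -/
def IsVertexCover (G : SimpleGraph V) (C : Set V) : Prop :=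
  ∀ ⦃u v : V⦄, G.Adj u v → u ∈ C ∨ v ∈ C

/-- The co-chordal cover number: the minimum number of co-chordal subgraphs of `G`
covering all edges of `G`. -/
noncomputable def cochord (G : SimpleGraph V) : ℕ :=
  sInf {k | ∃ H : Fin k → G.Subgraph, (∀ i, Chordal ((H i).coeᶜ)) ∧
    ∀ e ∈ G.edgeSet, ∃ i, e ∈ (H i).edgeSet}

/-- The domination number of a graph. -/
noncomputable def domNum {W : Type*} (K : SimpleGraph W) : ℕ :=
  sInf {n | ∃ D : Finset W, (∀ v : W, v ∈ D ∨ ∃ u ∈ D, K.Adj u v) ∧ D.card = n}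

lemma IsIndep.insert {G : SimpleGraph V} {S : Set V} {v : V} (hS : IsIndep G S)
    (hv : ∀ u ∈ S, ¬ G.Adj v u) : IsIndep G (insert v S) := by
  rintro a (rfl | ha) b (rfl | hb)
  · exact G.irrefl
  · exact hv b hb
  · exact fun hab => hv a ha hab.symm
  · exact hS ha hb

lemma adj_of_mem_closedNbhd_of_ne {G : SimpleGraph V} {x y : V} (hy : y ∈ closedNbhd G x)
    (hyx : y ≠ x) : G.Adj x y :=
  hy.resolve_left hyx

lemma not_adj_of_closedNbhd_subset {G : SimpleGraph V} {x y u : V}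
    (hsub : closedNbhd G y ⊆ closedNbhd G x) (hu : u ∉ closedNbhd G x) : ¬ G.Adj y u :=
  fun hyu => hu (hsub (Set.mem_insert_of_mem y hyu))

/-- a codominated vertex is a shedding vertex. -/
theorem codominated_is_shedding (G : SimpleGraph V) (x : V)
    (h : Codominated G x) : SheddingVertex G x := by
  obtain ⟨y, hyx, hsub⟩ := h
  intro S hS hind
  refine ⟨y, adj_of_mem_closedNbhd_of_ne (hsub (Set.mem_insert y _)) hyx, hind.insert ?_⟩
  exact fun u hu => not_adj_of_closedNbhd_subset hsub (hS hu)
end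

section
/- Every chordal graph is codismantlable. -/
open SimpleGraph

variable {V : Type*}

/-! A simplicial vertex `z` (one whose neighbourhood is a clique) with a neighbour `x` makes `x`
codominated, as `N[z] ⊆ N[x]`; since deleting vertices keeps a graph chordal, it suffices that
every chordal graph with an edge has a non-isolated simplicial vertex. This is Dirac's lemma, in
the form: for every clique `K` missing some vertex there is a simplicial vertex outside `K`.
If the graph is not complete, pick `v` with `K ⊆ N[v] ≠ V`, a component `C` of `G - N[v]`, and
let `S` be the neighbours of `v` adjacent to `C`. Two non-adjacent `x, y ∈ S` would close, with a
shortest `x`–`y` path through `C`, an induced cycle `v x … y` of length at least 4; so `S` is a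
clique, and induction on `C ∪ S` with the clique `S` gives a simplicial vertex in `C`, which stays
simplicial in `G` because all its neighbours lie in `C ∪ S`. -/

section

variable {G : SimpleGraph V}

namespace SimpleGraph.Walk

lemma getVert_val_add_one_of_length_eq {u : V} {n : ℕ} (p : G.Walk u u) (hp : p.length = n + 2)
    (i : Fin (n + 2)) : p.getVert ↑(i + 1) = p.getVert (↑i + 1) := by
  rw [Fin.val_add_one]
  split_ifs with h
  · rw [h, Fin.val_last, ← hp, getVert_length, getVert_zero]
  · rfl

theorem IsCycle.nonempty_embedding_cycleGraph {u : V} {p : G.Walk u u} (hc : p.IsCycle)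
    (hch : p.IsChordless) : Nonempty (cycleGraph p.length ↪g G) := by
  obtain ⟨n, hn⟩ : ∃ n, p.length = n + 2 := ⟨p.length - 2, by have := hc.three_le_length; omega⟩
  rw [hn]
  have hinj : Function.Injective fun i : Fin (n + 2) => p.getVert i := fun i j hij =>
    Fin.ext (hc.getVert_injOn' (by simp only [Set.mem_ofPred_eq]; omega)
      (by simp only [Set.mem_ofPred_eq]; omega) hij)
  have hsucc (i : Fin (n + 2)) : G.Adj (p.getVert i) (p.getVert ↑(i + 1)) := by
    rw [p.getVert_val_add_one_of_length_eq hn]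
    exact p.adj_getVert_succ (by omega)
  refine ⟨⟨⟨fun i => p.getVert i, hinj⟩, fun {i j} => ?_⟩⟩
  simp only [Function.Embedding.coeFn_mk, cycleGraph_adj, sub_eq_iff_eq_add']
  constructor
  · intro hadj
    obtain ⟨k, hk, hkij⟩ :=
      (mk_mem_edges_iff_exists p).mp (hch.mem_edges (getVert_mem_support _ _)
        (getVert_mem_support _ _) hadj)
    set k' : Fin (n + 2) := ⟨k, hn ▸ hk⟩
    have hk' : p.getVert ↑(k' + 1) = p.getVert (k + 1) :=
      p.getVert_val_add_one_of_length_eq hn k'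
    rw [← hk'] at hkij
    rcases Sym2.eq_iff.mp hkij with ⟨hi, hj⟩ | ⟨hj, hi⟩
    · right
      rw [← hinj hj, ← hinj (a₁ := k') hi]
    · left
      rw [← hinj hi, ← hinj (a₁ := k') hj]
  · rintro (rfl | rfl)
    · exact (hsucc j).symm
    · exact hsucc i

lemma support_drop_subset {u v : V} (p : G.Walk u v) (n : ℕ) : (p.drop n).support ⊆ p.support := by
  intro w hw
  obtain ⟨m, rfl, -⟩ := mem_support_iff_exists_getVert.mp hw
  rw [drop_getVert]
  exact getVert_mem_support _ _

lemma isChordless_of_forall_length_le {B : Set V} {x y : V} {q : G.Walk x y}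
    (hqB : ∀ w ∈ q.support, w ∈ B)
    (hmin : ∀ r : G.Walk x y, (∀ w ∈ r.support, w ∈ B) → q.length ≤ r.length) :
    q.IsChordless := by
  rw [isChordless_iff_forall_mem_edges]
  suffices key : ∀ i j, i < j → j ≤ q.length → G.Adj (q.getVert i) (q.getVert j) →
      s(q.getVert i, q.getVert j) ∈ q.edges by
    intro a b ha hb hab
    obtain ⟨i, rfl, hi⟩ := mem_support_iff_exists_getVert.mp ha
    obtain ⟨j, rfl, hj⟩ := mem_support_iff_exists_getVert.mp hb
    rcases lt_trichotomy i j with hij | rfl | hji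
    · exact key i j hij hj hab
    · exact absurd hab (G.loopless.irrefl _)
    · exact Sym2.eq_swap ▸ key j i hji hi hab.symm
  intro i j hij hj hadj
  by_cases hji : j = i + 1
  · subst hji
    exact (mk_mem_edges_iff_exists q).mpr ⟨i, by omega, rfl⟩
  · have hshort := hmin ((q.take i).append (cons hadj (q.drop j))) fun w hw => by
      rw [mem_support_append_iff, support_cons, List.mem_cons] at hw
      rcases hw with hw | rfl | hw
      · exact hqB w (List.take_subset _ _ ((support_take q i) ▸ hw))
      · exact hqB _ (getVert_mem_support _ _)
      · exact hqB w (q.support_drop_subset j hw)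
    simp only [length_append, take_length, length_cons, drop_length] at hshort
    omega

theorem exists_isPath_isChordless {B : Set V} {x y : V} (p : G.Walk x y)
    (hp : ∀ w ∈ p.support, w ∈ B) :
    ∃ q : G.Walk x y, q.IsPath ∧ q.IsChordless ∧ ∀ w ∈ q.support, w ∈ B := by
  classical
  let s := {r : G.Walk x y | ∀ w ∈ r.support, w ∈ B}
  let r := Function.argminOn length s ⟨p, hp⟩
  have hr : r ∈ s := Function.argminOn_mem _ _ _
  have hbypass : ∀ w ∈ r.bypass.support, w ∈ B :=
    fun w hw => hr w (r.support_bypass_subset_support hw)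
  refine ⟨r.bypass, r.bypass_isPath, isChordless_of_forall_length_le hbypass fun t ht => ?_,
    hbypass⟩
  exact r.length_bypass_le_length.trans (Function.argminOn_le length s ht)

end SimpleGraph.Walk

open SimpleGraph.Walk

theorem Chordal.not_isChordless (hG : Chordal G) {u : V} {p : G.Walk u u}
    (hc : p.IsCycle) (hp : 4 ≤ p.length) : ¬ p.IsChordless :=
  fun hch => (hG _ hp).false (hc.nonempty_embedding_cycleGraph hch).some

theorem Chordal.adj_of_isPath_of_isChordless (hG : Chordal G) {x y v : V}
    {q : G.Walk x y} (hq : q.IsPath) (hch : q.IsChordless) (hxy : x ≠ y) (hvx : G.Adj v x)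
    (hvy : G.Adj v y) (hv : v ∉ q.support) (hvq : ∀ w ∈ q.support, G.Adj v w → w = x ∨ w = y) :
    G.Adj x y := by
  by_contra hnxy
  have hlen : 2 ≤ q.length := by
    by_contra! h
    interval_cases hl : q.length
    · exact hxy (eq_of_length_eq_zero hl)
    · exact hnxy (adj_of_length_eq_one hl)
  let c := cons hvx (q.concat hvy.symm)
  have hc : c.IsCycle := by
    rw [cons_isCycle_iff]
    refine ⟨hq.concat hv _, fun he => ?_⟩
    rw [edges_concat, List.concat_eq_append, List.mem_append, List.mem_singleton] at he
    rcases he with he | he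
    · exact hv (q.fst_mem_support_of_mem_edges he)
    · rcases Sym2.eq_iff.mp he with ⟨rfl, -⟩ | ⟨-, rfl⟩
      · exact hv q.end_mem_support
      · exact hxy rfl
  refine hG.not_isChordless hc (by simp only [c, length_cons, length_concat]; omega) ?_
  have hsupport : ∀ w ∈ c.support, w = v ∨ w ∈ q.support := by
    simp only [c, support_cons, support_concat, List.mem_cons, List.mem_append]
    tauto
  have hedges : ∀ w ∈ q.support, G.Adj v w → s(v, w) ∈ c.edges := by
    intro w hw hvw
    rcases hvq w hw hvw with rfl | rfl <;> simp [c, edges_concat, Sym2.eq_swap]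
  rw [isChordless_iff_forall_mem_edges]
  intro a b ha hb hab
  rcases hsupport a ha with rfl | haq <;> rcases hsupport b hb with rfl | hbq
  · exact absurd hab (G.loopless.irrefl _)
  · exact hedges b hbq hab
  · exact Sym2.eq_swap ▸ hedges a haq hab.symm
  · simp only [c, edges_cons, edges_concat, List.concat_eq_append, List.mem_cons, List.mem_append]
    exact Or.inr (Or.inl (hch.mem_edges haq hbq hab))

theorem mem_closedNbhd {v w : V} : w ∈ closedNbhd G v ↔ w = v ∨ G.Adj v w := Iff.rfl

namespace SimpleGraph

def reachableWithin (G : SimpleGraph V) (D : Set V) (c : V) : Set V :=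
  {z | ∃ p : G.Walk c z, ∀ w ∈ p.support, w ∈ D}

variable {D : Set V} {c : V}

theorem self_mem_reachableWithin (hc : c ∈ D) : c ∈ G.reachableWithin D c :=
  ⟨nil, by simpa using hc⟩

theorem reachableWithin_subset : G.reachableWithin D c ⊆ D :=
  fun z ⟨p, hp⟩ => hp z p.end_mem_support

theorem mem_reachableWithin_of_adj {z w : V} (hz : z ∈ G.reachableWithin D c) (hw : w ∈ D)
    (hzw : G.Adj z w) : w ∈ G.reachableWithin D c := by
  obtain ⟨p, hp⟩ := hz
  refine ⟨p.concat hzw, fun u hu => ?_⟩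
  rw [support_concat, List.mem_append, List.mem_singleton] at hu
  exact hu.elim (hp u) (· ▸ hw)

theorem exists_walk_of_mem_reachableWithin {a b : V} (ha : a ∈ G.reachableWithin D c)
    (hb : b ∈ G.reachableWithin D c) :
    ∃ p : G.Walk a b, ∀ w ∈ p.support, w ∈ G.reachableWithin D c := by
  classical
  have hprefix {z : V} (p : G.Walk c z) (hp : ∀ w ∈ p.support, w ∈ D) :
      ∀ w ∈ p.support, w ∈ G.reachableWithin D c := fun w hw =>
    ⟨p.takeUntil w hw, fun u hu => hp u (p.support_takeUntil_subset_support hw hu)⟩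
  obtain ⟨pa, hpa⟩ := ha
  obtain ⟨pb, hpb⟩ := hb
  refine ⟨pa.reverse.append pb, fun w hw => ?_⟩
  rw [mem_support_append_iff, support_reverse, List.mem_reverse] at hw
  exact hw.elim (hprefix pa hpa w) (hprefix pb hpb w)

end SimpleGraph

theorem Chordal.isClique_neighborSet_inter_closedNbhdSet (hG : Chordal G) {C : Set V} {v : V}
    (hC : ∀ a ∈ C, ∀ b ∈ C, ∃ p : G.Walk a b, ∀ w ∈ p.support, w ∈ C)
    (hvC : Disjoint C (closedNbhd G v)) :
    G.IsClique (G.neighborSet v ∩ closedNbhdSet G C) := by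
  have hCv {w : V} (hw : w ∈ C) (hvw : w = v ∨ G.Adj v w) : False :=
    Set.disjoint_left.mp hvC hw hvw
  have hseen : ∀ x ∈ G.neighborSet v ∩ closedNbhdSet G C, ∃ u ∈ C, G.Adj u x :=
    fun x ⟨hvx, hx⟩ => hx.resolve_left fun hxC => hCv hxC (Or.inr hvx)
  intro x hx y hy hxy
  obtain ⟨ux, hux, huxx⟩ := hseen x hx
  obtain ⟨uy, huy, huyy⟩ := hseen y hy
  obtain ⟨p, hp⟩ := hC ux hux uy huy
  obtain ⟨q, hq, hch, hqB⟩ := (cons huxx.symm (p.concat huyy)).exists_isPath_isChordless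
    (B := insert x (insert y C)) (by
      simp only [support_cons, support_concat, List.mem_cons, List.mem_append, List.mem_nil_iff,
        or_false]
      rintro w (rfl | hw | rfl)
      · exact Set.mem_insert _ _
      · exact Set.mem_insert_of_mem _ (Set.mem_insert_of_mem _ (hp w hw))
      · exact Set.mem_insert_of_mem _ (Set.mem_insert _ _))
  refine hG.adj_of_isPath_of_isChordless hq hch hxy hx.1 hy.1 (fun hv => ?_) fun w hw hvw => ?_
  · rcases hqB v hv with rfl | rfl | hvC'
    · exact G.loopless.irrefl _ hx.1
    · exact G.loopless.irrefl _ hy.1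
    · exact hCv hvC' (Or.inl rfl)
  · rcases hqB w hw with rfl | rfl | hwC
    · exact Or.inl rfl
    · exact Or.inr rfl
    · exact (hCv hwC (Or.inr hvw)).elim

def IsSimplicialOn (G : SimpleGraph V) (A : Set V) (z : V) : Prop :=
  G.IsClique (G.neighborSet z ∩ A)

lemma exists_mem_not_mem_closedNbhd_of_not_isClique {A K : Set V} (hA : ¬ G.IsClique A)
    (hK : G.IsClique K) :
    ∃ v ∈ A, (∃ c ∈ A, c ∉ closedNbhd G v) ∧ K ∩ A ⊆ closedNbhd G v := by
  simp only [SimpleGraph.IsClique, Set.Pairwise, not_forall] at hA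
  obtain ⟨p, hp, q, hq, hpq, hnpq⟩ := hA
  by_cases hKp : K ∩ A ⊆ closedNbhd G p
  · exact ⟨p, hp, ⟨q, hq, by rw [mem_closedNbhd]; tauto⟩, hKp⟩
  obtain ⟨s, ⟨hsK, hsA⟩, hsp⟩ := Set.not_subset.mp hKp
  rw [mem_closedNbhd, not_or] at hsp
  refine ⟨s, hsA, ⟨p, hp, ?_⟩, fun t ⟨htK, _⟩ => ?_⟩
  · rw [mem_closedNbhd, not_or]
    exact ⟨Ne.symm hsp.1, fun h => hsp.2 h.symm⟩
  · rw [mem_closedNbhd, or_iff_not_imp_left]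
    exact fun hts => (hK htK hsK hts).symm

theorem Chordal.exists_isSimplicialOn_not_mem (hG : Chordal G) (A : Finset V) {K : Set V}
    (hK : G.IsClique K) {c : V} (hc : c ∈ A) (hcK : c ∉ K) :
    ∃ z ∈ A, z ∉ K ∧ IsSimplicialOn G A z := by
  classical
  induction hn : A.card using Nat.strong_induction_on generalizing A K c with
  | _ n ih =>
  by_cases hA : G.IsClique (A : Set V)
  · exact ⟨c, hc, hcK, hA.subset Set.inter_subset_right⟩
  obtain ⟨v, hvA, ⟨c', hc'A, hc'v⟩, hKv⟩ := exists_mem_not_mem_closedNbhd_of_not_isClique hA hK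
  set C := G.reachableWithin (↑A \ closedNbhd G v) c'
  have hCA : C ⊆ ↑A \ closedNbhd G v := reachableWithin_subset
  have hCv : Disjoint C (closedNbhd G v) := Set.disjoint_left.mpr fun u hu => (hCA hu).2
  set S := G.neighborSet v ∩ closedNbhdSet G C
  have hS : G.IsClique S := hG.isClique_neighborSet_inter_closedNbhdSet
    (fun a ha b hb => exists_walk_of_mem_reachableWithin ha hb) hCv
  set A' := A.filter (· ∈ C ∪ S)
  have hc'C : c' ∈ C := self_mem_reachableWithin ⟨hc'A, hc'v⟩
  have hvA' : v ∉ A' := fun h => by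
    rcases (Finset.mem_filter.mp h).2 with hvC | hvS
    · exact (hCA hvC).2 (mem_closedNbhd.mpr (Or.inl rfl))
    · exact G.loopless.irrefl v hvS.1
  obtain ⟨z, hzA', hzS, hz⟩ := ih A'.card (hn ▸ Finset.card_lt_card
      (Finset.filter_ssubset.mpr ⟨v, hvA, fun h => hvA' (Finset.mem_filter.mpr ⟨hvA, h⟩)⟩))
    A' hS (Finset.mem_filter.mpr ⟨hc'A, Or.inl hc'C⟩)
    (fun h => Set.disjoint_left.mp hCv hc'C (Or.inr h.1)) rfl
  obtain ⟨hzA, hzC⟩ := Finset.mem_filter.mp hzA'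
  replace hzC : z ∈ C := hzC.resolve_right hzS
  refine ⟨z, hzA, fun hzK => (hCA hzC).2 (hKv ⟨hzK, hzA⟩), hz.subset fun w ⟨hzw, hwA⟩ => ?_⟩
  refine ⟨hzw, Finset.mem_filter.mpr ⟨hwA, ?_⟩⟩
  by_cases hw : w ∈ closedNbhd G v
  · refine Or.inr ⟨?_, Or.inr ⟨z, hzC, hzw⟩⟩
    rcases hw with rfl | hvw
    · exact ((hCA hzC).2 (Or.inr hzw.symm)).elim
    · exact hvw
  · exact Or.inl (mem_reachableWithin_of_adj hzC ⟨hwA, hw⟩ hzw)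

lemma codominatedOn_of_isSimplicialOn {A : Finset V} {x z : V} (hx : x ∈ A) (hz : z ∈ A)
    (hzx : G.Adj z x) (hsimp : IsSimplicialOn G A z) : CodominatedOn G A x := by
  refine ⟨z, hz, hzx.ne, fun w hw hzw => ?_⟩
  rcases hzw with rfl | hzw
  · exact Or.inr hzx.symm
  · rw [or_iff_not_imp_left]
    exact fun hwx => hsimp ⟨hzx, hx⟩ ⟨hzw, hw⟩ (Ne.symm hwx)

theorem Chordal.exists_codominatedOn (hG : Chordal G) {A : Finset V} {u w : V} (hu : u ∈ A)
    (hw : w ∈ A) (huw : G.Adj u w) : ∃ x ∈ A, CodominatedOn G A x := by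
  classical
  set A' := A.filter fun z => ∃ x ∈ A, G.Adj z x
  obtain ⟨z, hzA', -, hz⟩ := hG.exists_isSimplicialOn_not_mem A' SimpleGraph.isClique_empty
    (Finset.mem_filter.mpr ⟨hu, w, hw, huw⟩) (Set.notMem_empty u)
  obtain ⟨hzA, x, hxA, hzx⟩ := Finset.mem_filter.mp hzA'
  refine ⟨x, hxA, codominatedOn_of_isSimplicialOn hxA hzA hzx (hz.subset fun y ⟨hzy, hyA⟩ => ?_)⟩
  exact ⟨hzy, Finset.mem_filter.mpr ⟨hyA, z, hzA, hzy.symm⟩⟩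

theorem Chordal.codismantlableOn [DecidableEq V] (hG : Chordal G) (A : Finset V) :
    CodismantlableOn G A := by
  induction hn : A.card using Nat.strong_induction_on generalizing A with
  | _ n ih =>
  rw [CodismantlableOn]
  by_cases hA : ∀ x ∈ A, ∀ y ∈ A, ¬ G.Adj x y
  · exact Or.inl hA
  push Not at hA
  obtain ⟨u, hu, w, hw, huw⟩ := hA
  obtain ⟨x, hx, hcod⟩ := hG.exists_codominatedOn hu hw huw
  exact Or.inr ⟨x, hx, hcod, ih _ (hn ▸ Finset.card_erase_lt_of_mem hx) _ rfl⟩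

end

/-- every chordal graph is codismantlable. -/
theorem chordal_codismantlable [Fintype V] [DecidableEq V] (G : SimpleGraph V)
    (h : Chordal G) : Codismantlable G :=
  h.codismantlableOn Finset.univ
end

section
/- Let G be a codismantlable graph, with codismantling sequence of vertices x_0, x_1, ..., x_k (i.e., setting G_0 = G and G_{i+1} = G_i − x_i, each x_i is codominated in G_i and G_{k+1} is edgeless). Then {x_0, x_1, ..., x_k} is a minimal vertex cover of G. -/
open SimpleGraph

variable {V : Type*}

namespace CodisSeq

variable [DecidableEq V] {G : SimpleGraph V}

theorem mem_or_mem_of_adj {L : List V} {A : Finset V} (h : CodisSeq G A L) {u v : V}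
    (hu : u ∈ A) (hv : v ∈ A) (huv : G.Adj u v) : u ∈ L ∨ v ∈ L := by
  induction L generalizing A with
  | nil => exact absurd huv (h u hu v hv)
  | cons x xs ih =>
    obtain ⟨-, -, hrest⟩ := h
    by_cases hux : u = x
    · exact .inl (hux ▸ List.mem_cons_self)
    by_cases hvx : v = x
    · exact .inr (hvx ▸ List.mem_cons_self)
    exact (ih hrest (Finset.mem_erase.2 ⟨hux, hu⟩) (Finset.mem_erase.2 ⟨hvx, hv⟩)).imp
      (List.mem_cons_of_mem x) (List.mem_cons_of_mem x)

theorem exists_adj_not_mem {L : List V} {A : Finset V} (h : CodisSeq G A L) {x : V}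
    (hx : x ∈ L) : ∃ r ∈ A, r ∉ L ∧ G.Adj x r := by
  induction L generalizing A x with
  | nil => exact absurd hx List.not_mem_nil
  | cons x₀ xs ih =>
    obtain ⟨-, ⟨y, hyA, hyx₀, hdom⟩, hrest⟩ := h
    rcases List.mem_cons.1 hx with rfl | hxs
    · -- `N[y] ⊆ N[x]` turns a neighbour of `y` (or `y` itself) surviving the sequence into one of `x`.
      have hadj : ∀ z ∈ A, z ≠ x → (z = y ∨ G.Adj y z) → G.Adj x z :=
        fun z hz hzx hzy => (hdom z hz hzy).resolve_left hzx
      by_cases hy : y ∈ xs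
      · obtain ⟨r, hrA, hrxs, hyr⟩ := ih hrest hy
        obtain ⟨hrx, hrA⟩ := Finset.mem_erase.1 hrA
        exact ⟨r, hrA, by simp [hrx, hrxs], hadj r hrA hrx (.inr hyr)⟩
      · exact ⟨y, hyA, by simp [hyx₀, hy], hadj y hyA hyx₀ (.inl rfl)⟩
    · obtain ⟨r, hrA, hrxs, hxr⟩ := ih hrest hxs
      obtain ⟨hrx₀, hrA⟩ := Finset.mem_erase.1 hrA
      exact ⟨r, hrA, by simp [hrx₀, hrxs], hxr⟩

end CodisSeq

theorem not_isVertexCover_of_ssubset {G : SimpleGraph V} {C D : Set V}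
    (hC : ∀ x ∈ C, ∃ r ∉ C, G.Adj x r) (hDC : D ⊂ C) : ¬ _root_.IsVertexCover G D := by
  intro hD
  obtain ⟨x, hxC, hxD⟩ := Set.exists_of_ssubset hDC
  obtain ⟨r, hrC, hxr⟩ := hC x hxC
  exact (hD hxr).elim hxD fun hrD => hrC (hDC.subset hrD)

/-- the vertices of a codismantling sequence form a minimal vertex
cover. -/
theorem codisSeq_minimal_vertex_cover [Fintype V] [DecidableEq V]
    (G : SimpleGraph V) (L : List V) (h : CodisSeq G Finset.univ L) :
    _root_.IsVertexCover G {x | x ∈ L} ∧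
      ∀ C : Set V, C ⊂ {x | x ∈ L} → ¬ _root_.IsVertexCover G C :=
  ⟨fun _ _ huv => h.mem_or_mem_of_adj (Finset.mem_univ _) (Finset.mem_univ _) huv,
    fun _ => not_isVertexCover_of_ssubset fun _ hx =>
      let ⟨r, _, hr, hxr⟩ := h.exists_adj_not_mem hx
      ⟨r, hr, hxr⟩⟩
end

section
/- If G is a well-covered graph and I is an independent set in G, then the induced subgraph G − N_G[I] is well-covered. -/
open SimpleGraph

variable {V : Type*}

lemma maxIndep_union_aux (G : SimpleGraph V) (I : Set V)
    (hI : IsIndep G I) {S : Set ↥(closedNbhdSet G I)ᶜ}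
    (hS : MaxIndep (G.induce (closedNbhdSet G I)ᶜ) S) :
    MaxIndep G (Subtype.val '' S ∪ I) := by
  obtain ⟨hSi, hSm⟩ := hS
  constructor
  · rintro u hu v hv hadj
    rcases hu with ⟨⟨u', hu'⟩, hu1, rfl⟩ | hu
    · rcases hv with ⟨⟨v', hv'⟩, hv1, rfl⟩ | hv
      · exact hSi hu1 hv1 hadj
      · exact hu' (Or.inr ⟨_, hv, hadj.symm⟩)
    · rcases hv with ⟨⟨v', hv'⟩, hv1, rfl⟩ | hv
      · exact hv' (Or.inr ⟨_, hu, hadj⟩)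
      · exact hI hu hv hadj
  · intro T hT hsub
    apply Set.Subset.antisymm hsub
    intro v hv
    by_cases hvN : v ∈ closedNbhdSet G I
    · rcases hvN with hvI | ⟨u, huI, hadj⟩
      · exact Or.inr hvI
      · exact absurd hadj (hT (hsub (Or.inr huI)) hv)
    · have hvals : ∀ a ∈ insert (⟨v, hvN⟩ : ↥(closedNbhdSet G I)ᶜ) S, (a : V) ∈ T := by
        rintro a (rfl | ha)
        · exact hv
        · exact hsub (Or.inl ⟨a, ha, rfl⟩)
      have hind : IsIndep (G.induce (closedNbhdSet G I)ᶜ)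
          (insert (⟨v, hvN⟩ : ↥(closedNbhdSet G I)ᶜ) S) := by
        intro a ha b hb hadj
        exact hT (hvals a ha) (hvals b hb) hadj
      have heq := hSm _ hind (Set.subset_insert _ _)
      have hmem : (⟨v, hvN⟩ : ↥(closedNbhdSet G I)ᶜ) ∈ S := by
        rw [heq]; exact Set.mem_insert _ _
      exact Or.inl ⟨_, hmem, rfl⟩

/-- deleting the closed neighborhood of an independent set from a
well-covered graph leaves a well-covered graph. -/
theorem wellCovered_del_closedNbhdSet [Fintype V] (G : SimpleGraph V) (I : Set V)
    (hG : WellCovered G) (hI : IsIndep G I) :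
    WellCovered (G.induce (closedNbhdSet G I)ᶜ) := by
  intro S T hS hT
  have h := hG _ _ (maxIndep_union_aux G I hI hS) (maxIndep_union_aux G I hI hT)
  have hcard : ∀ (S : Set ↥(closedNbhdSet G I)ᶜ),
      (Subtype.val '' S ∪ I).ncard = S.ncard + I.ncard := by
    intro S
    have hdisj : Disjoint (Subtype.val '' S) I := by
      rw [Set.disjoint_left]; rintro a ⟨⟨a', ha'⟩, _, rfl⟩ haI
      exact ha' (Or.inl haI)
    rw [Set.ncard_union_eq hdisj (Set.toFinite _) (Set.toFinite _),
      Set.ncard_image_of_injective _ Subtype.val_injective]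
  have h1 := hcard S
  have h2 := hcard T
  omega
end

section
/- If G is a well-covered graph and x is a codominated vertex of G, then G − x is well-covered. -/
open SimpleGraph

variable {V : Type*}

lemma isIndep_mono {G : SimpleGraph V} {S T : Set V} (hT : IsIndep G T) (h : S ⊆ T) :
    IsIndep G S := fun _ hu _ hv => hT (h hu) (h hv)

lemma maxIndep_iff {G : SimpleGraph V} {S : Set V} :
    MaxIndep G S ↔ IsIndep G S ∧ ∀ v, v ∉ S → ¬ IsIndep G (insert v S) := by
  constructor
  · rintro ⟨hS, hmax⟩
    refine ⟨hS, fun v hv hind => hv ?_⟩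
    have := hmax (insert v S) hind (Set.subset_insert _ _)
    rw [this]; exact Set.mem_insert _ _
  · rintro ⟨hS, h⟩
    refine ⟨hS, fun T hT hST => ?_⟩
    by_contra hne
    obtain ⟨v, hvT, hvS⟩ := Set.exists_of_ssubset (hST.ssubset_of_ne hne)
    exact h v hvS (isIndep_mono hT (Set.insert_subset hvT hST))

/-- Maximal independent sets of `G - x` lift to maximal independent sets of `G`
when `x` is codominated. -/
lemma maxIndep_image {G : SimpleGraph V} {x : V} (hx : Codominated G x)
    {S : Set ({x}ᶜ : Set V)} (hS : MaxIndep (G.induce {x}ᶜ) S) :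
    MaxIndep G (Subtype.val '' S) := by
  obtain ⟨hSi, hSm⟩ := maxIndep_iff.mp hS
  have hind : IsIndep G (Subtype.val '' S) := by
    rintro _ ⟨u, hu, rfl⟩ _ ⟨v, hv, rfl⟩ hadj
    exact hSi hu hv hadj
  rw [maxIndep_iff]
  refine ⟨hind, fun v hv hvind => ?_⟩
  by_cases hvx : v = x
  · subst hvx
    obtain ⟨y, hyx, hy⟩ := hx
    have hyNx : y ∈ closedNbhd G v := hy (Set.mem_insert _ _)
    have hxy : G.Adj v y := by
      rcases hyNx with h | h
      · exact absurd h hyx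
      · exact h
    have hyS : y ∉ Subtype.val '' S := fun hmem =>
      hvind (Set.mem_insert _ _) (Set.mem_insert_of_mem _ hmem) hxy
    have hyind : IsIndep G (insert y (Subtype.val '' S)) := by
      have key : ∀ s ∈ Subtype.val '' S, ¬ G.Adj y s := by
        intro s hs hadj
        have : s ∈ closedNbhd G v := hy (Set.mem_insert_of_mem _ hadj)
        rcases this with h | h
        · subst h; exact hv hs
        · exact hvind (Set.mem_insert _ _) (Set.mem_insert_of_mem _ hs) h
      rintro u (rfl | hu) w (rfl | hw) hadj
      · exact G.irrefl hadj
      · exact key w hw hadj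
      · exact key u hu (G.adj_symm hadj)
      · exact hind hu hw hadj
    have hyS' : (⟨y, fun h => hyx h⟩ : ({v}ᶜ : Set V)) ∉ S := fun h =>
      hyS ⟨_, h, rfl⟩
    refine hSm _ hyS' ?_
    rintro u (rfl | hu) w (rfl | hw) hadj
    · exact (G.induce _).irrefl hadj
    · exact hyind (Set.mem_insert _ _) (Set.mem_insert_of_mem _ ⟨w, hw, rfl⟩) hadj
    · exact hyind (Set.mem_insert_of_mem _ ⟨u, hu, rfl⟩) (Set.mem_insert _ _) hadj
    · exact hSi hu hw hadj
  · have hvS : (⟨v, hvx⟩ : ({x}ᶜ : Set V)) ∉ S := fun h => hv ⟨_, h, rfl⟩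
    refine hSm _ hvS ?_
    rintro u (rfl | hu) w (rfl | hw) hadj
    · exact (G.induce _).irrefl hadj
    · exact hvind (Set.mem_insert _ _) (Set.mem_insert_of_mem _ ⟨w, hw, rfl⟩) hadj
    · exact hvind (Set.mem_insert_of_mem _ ⟨u, hu, rfl⟩) (Set.mem_insert _ _) hadj
    · exact hSi hu hw hadj

/-- deleting a codominated vertex from a well-covered graph leaves a
well-covered graph. -/
theorem wellCovered_del_codominated [Fintype V] (G : SimpleGraph V) (x : V)
    (hG : WellCovered G) (hx : Codominated G x) :
    WellCovered (G.induce {x}ᶜ) := by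
  intro S T hS hT
  have h1 := maxIndep_image hx hS
  have h2 := maxIndep_image hx hT
  have := hG _ _ h1 h2
  rwa [Set.ncard_image_of_injective _ Subtype.val_injective,
    Set.ncard_image_of_injective _ Subtype.val_injective] at this
end

section
/- Let G and H be graphs such that G is codismantlable to H (H is obtained from G by successively deleting codominated vertices). If G is well-covered, then H is well-covered. -/
open SimpleGraph

variable {V : Type*}

/-- Maximal independent set within `A`. -/
def MaxIndepOn (G : SimpleGraph V) (A : Finset V) (S : Set V) : Prop :=
  S ⊆ ↑A ∧ IsIndep G S ∧ ∀ T : Set V, T ⊆ ↑A → IsIndep G T → S ⊆ T → S = T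

/-- Well-covered within `A`. -/
def WellCoveredOn (G : SimpleGraph V) (A : Finset V) : Prop :=
  ∀ S T : Set V, MaxIndepOn G A S → MaxIndepOn G A T → S.ncard = T.ncard

lemma maxIndepOn_of_erase [DecidableEq V] {G : SimpleGraph V} {A : Finset V} {x : V}
    (hx : x ∈ A) (hc : CodominatedOn G A x) {S : Set V}
    (hS : MaxIndepOn G (A.erase x) S) : MaxIndepOn G A S := by
  obtain ⟨y, hyA, hyx, hcod⟩ := hc
  obtain ⟨hSsub, hSind, hSmax⟩ := hS
  have hsubA : (↑(A.erase x) : Set V) ⊆ ↑A := by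
    intro z hz; exact Finset.mem_coe.mpr (Finset.mem_of_mem_erase (Finset.mem_coe.mp hz))
  have hadjxy : G.Adj x y := by
    rcases hcod y hyA (Or.inl rfl) with h | h
    · exact absurd h hyx
    · exact h
  refine ⟨hSsub.trans hsubA, hSind, ?_⟩
  intro T hTA hTind hST
  by_cases hxT : x ∈ T
  · -- contradiction: S ∪ {y} is independent in A.erase x, strictly larger
    exfalso
    have hyS : y ∉ S := by
      intro hyS
      exact hTind hxT (hST hyS) hadjxy
    have hind : IsIndep G (insert y S) := by
      intro u hu v hv hadj
      have key : ∀ s ∈ S, ¬ G.Adj y s := by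
        intro s hs hys
        have hsA : s ∈ A := Finset.mem_of_mem_erase (Finset.mem_coe.mp (hSsub hs))
        rcases hcod s hsA (Or.inr hys) with h | h
        · exact (Finset.ne_of_mem_erase (Finset.mem_coe.mp (hSsub hs))) h
        · exact hTind hxT (hST hs) h
      rcases hu with rfl | hu
      · rcases hv with rfl | hv
        · exact G.irrefl hadj
        · exact key v hv hadj
      · rcases hv with rfl | hv
        · exact key u hu hadj.symm
        · exact hSind hu hv hadj
    have hsub : (insert y S : Set V) ⊆ ↑(A.erase x) := by
      intro z hz
      rcases hz with rfl | hz
      · exact Finset.mem_coe.mpr (Finset.mem_erase.mpr ⟨hyx, hyA⟩)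
      · exact hSsub hz
    have := hSmax (insert y S) hsub hind (Set.subset_insert y S)
    exact hyS (this ▸ Set.mem_insert y S)
  · refine hSmax T ?_ hTind hST
    intro z hz
    exact Finset.mem_coe.mpr (Finset.mem_erase.mpr
      ⟨fun h => hxT (h ▸ hz), Finset.mem_coe.mp (hTA hz)⟩)

lemma wellCoveredOn_erase [DecidableEq V] {G : SimpleGraph V} {A : Finset V} {x : V}
    (hx : x ∈ A) (hc : CodominatedOn G A x) (hA : WellCoveredOn G A) :
    WellCoveredOn G (A.erase x) := by
  intro S T hS hT
  exact hA S T (maxIndepOn_of_erase hx hc hS) (maxIndepOn_of_erase hx hc hT)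

lemma wellCoveredOn_codisTo [DecidableEq V] {G : SimpleGraph V} {A B : Finset V}
    (h : CodisTo G A B) (hA : WellCoveredOn G A) : WellCoveredOn G B := by
  induction h with
  | refl A => exact hA
  | step hx hc _ ih => exact ih (wellCoveredOn_erase hx hc hA)

/-- if `G` is codismantlable to `H` and `G` is well-covered, then so
is `H`. -/
theorem wellCovered_codisTo [Fintype V] [DecidableEq V] (G : SimpleGraph V)
    (B : Finset V) (h : CodisTo G Finset.univ B) (hG : WellCovered G) :
    WellCovered (G.induce ↑B) := by
  have hUniv : WellCoveredOn G Finset.univ := by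
    intro S T hS hT
    refine hG S T ⟨hS.2.1, fun U hU hSU => hS.2.2 U ?_ hU hSU⟩
      ⟨hT.2.1, fun U hU hTU => hT.2.2 U ?_ hU hTU⟩ <;>
      simp
  have hB : WellCoveredOn G B := wellCoveredOn_codisTo h hUniv
  intro S T hS hT
  have key : ∀ S : Set ↑(↑B : Set V), MaxIndep (G.induce ↑B) S →
      MaxIndepOn G B (Subtype.val '' S) := by
    intro S ⟨hind, hmax⟩
    refine ⟨?_, ?_, ?_⟩
    · rintro _ ⟨a, _, rfl⟩; exact a.2
    · rintro _ ⟨a, ha, rfl⟩ _ ⟨b, hb, rfl⟩ hadj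
      exact hind ha hb hadj
    · intro T hTB hTind hST
      have hT' : IsIndep (G.induce ↑B) (Subtype.val ⁻¹' T) := by
        intro u hu v hv hadj
        exact hTind hu hv hadj
      have hsub : S ⊆ Subtype.val ⁻¹' T := by
        intro a ha
        exact hST ⟨a, ha, rfl⟩
      have := hmax _ hT' hsub
      ext z
      constructor
      · rintro ⟨a, ha, rfl⟩; exact hST ⟨a, ha, rfl⟩
      · intro hz
        exact ⟨⟨z, hTB hz⟩, this ▸ hz, rfl⟩
  have h1 := key S hS
  have h2 := key T hT
  have := hB _ _ h1 h2
  rwa [Set.ncard_image_of_injective S Subtype.val_injective,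
    Set.ncard_image_of_injective T Subtype.val_injective] at this
end

section
/- If x is a codominated vertex of a graph G, then the induced matching number satisfies im(G − N_G[x]) < im(G), and also im(G − x) ≤ im(G). -/
open SimpleGraph

variable {V : Type*}

lemma empty_isInducedMatching (G : SimpleGraph V) : IsInducedMatching G (∅ : Finset (Sym2 V)) :=
  ⟨⟨by simp, by simp⟩, by simp⟩

lemma indMatch_set_nonempty (G : SimpleGraph V) :
    {n | ∃ M : Finset (Sym2 V), IsInducedMatching G M ∧ M.card = n}.Nonempty :=
  ⟨0, ∅, empty_isInducedMatching G, rfl⟩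

lemma indMatch_set_bdd [Fintype V] (G : SimpleGraph V) :
    BddAbove {n | ∃ M : Finset (Sym2 V), IsInducedMatching G M ∧ M.card = n} := by
  classical
  refine ⟨Fintype.card (Sym2 V), ?_⟩
  rintro n ⟨M, _, rfl⟩
  exact Finset.card_le_univ M

lemma lift_induced_matching [DecidableEq V] (G : SimpleGraph V) (S : Set V)
    (M : Finset (Sym2 S)) (hM : IsInducedMatching (G.induce S) M) :
    IsInducedMatching G (M.image (Sym2.map (Subtype.val : S → V))) ∧
    (M.image (Sym2.map (Subtype.val : S → V))).card = M.card ∧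
    ∀ e ∈ M.image (Sym2.map (Subtype.val : S → V)), ∀ v ∈ e, v ∈ S := by
  classical
  have hinj : Function.Injective (Sym2.map (Subtype.val : S → V)) :=
    Sym2.map.injective Subtype.val_injective
  obtain ⟨⟨hedge, hdisj⟩, hind⟩ := hM
  refine ⟨⟨⟨?_, ?_⟩, ?_⟩, Finset.card_image_of_injective M hinj, ?_⟩
  · rintro e he
    obtain ⟨e', he', rfl⟩ := Finset.mem_image.mp he
    induction e' using Sym2.inductionOn with
    | hf a b =>
      have := hedge _ he'
      simp only [SimpleGraph.mem_edgeSet, comap_adj, Function.Embedding.coe_subtype,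
        Sym2.map_pair_eq] at this ⊢
      exact this
  · rintro e he f hf hne v hv hvf
    obtain ⟨e', he', rfl⟩ := Finset.mem_image.mp he
    obtain ⟨f', hf', rfl⟩ := Finset.mem_image.mp hf
    have hne' : e' ≠ f' := fun h => hne (by rw [h])
    obtain ⟨u1, hu1, rfl⟩ := Sym2.mem_map.mp hv
    obtain ⟨u2, hu2, h12⟩ := Sym2.mem_map.mp hvf
    have : u2 = u1 := Subtype.val_injective h12
    exact hdisj e' he' f' hf' hne' u1 hu1 (this ▸ hu2)
  · rintro e he f hf hne u hu v hv
    obtain ⟨e', he', rfl⟩ := Finset.mem_image.mp he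
    obtain ⟨f', hf', rfl⟩ := Finset.mem_image.mp hf
    have hne' : e' ≠ f' := fun h => hne (by rw [h])
    obtain ⟨a, ha, rfl⟩ := Sym2.mem_map.mp hu
    obtain ⟨b, hb, rfl⟩ := Sym2.mem_map.mp hv
    have := hind e' he' f' hf' hne' a ha b hb
    simpa using this
  · rintro e he v hv
    obtain ⟨e', he', rfl⟩ := Finset.mem_image.mp he
    obtain ⟨a, _, rfl⟩ := Sym2.mem_map.mp hv
    exact a.2

lemma indMatchNum_induce_le [Fintype V] [DecidableEq V] (G : SimpleGraph V) (S : Set V) :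
    indMatchNum (G.induce S) ≤ indMatchNum G := by
  classical
  refine csSup_le (indMatch_set_nonempty _) ?_
  rintro n ⟨M, hM, rfl⟩
  obtain ⟨h1, h2, _⟩ := lift_induced_matching G S M hM
  exact le_csSup (indMatch_set_bdd G) ⟨_, h1, h2⟩

/-- if `x` is codominated then `im(G - x) ≤ im(G)` and
`im(G - N[x]) < im(G)`. -/
theorem indMatchNum_del_codominated [Fintype V] (G : SimpleGraph V) (x : V)
    (hx : Codominated G x) :
    indMatchNum (G.induce {x}ᶜ) ≤ indMatchNum G ∧
      indMatchNum (G.induce (closedNbhd G x)ᶜ) < indMatchNum G := by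
  classical
  obtain ⟨y, hyx, hsub⟩ := hx
  have hadjxy : G.Adj x y := by
    have hy : y ∈ closedNbhd G x := hsub (Set.mem_insert y _)
    rcases hy with h | h
    · exact absurd h hyx
    · exact h
  refine ⟨indMatchNum_induce_le G _, ?_⟩
  -- strict part
  set S1 := {n | ∃ M : Finset (Sym2 ((closedNbhd G x)ᶜ : Set V)),
    IsInducedMatching (G.induce (closedNbhd G x)ᶜ) M ∧ M.card = n} with hS1
  have hbdd1 : BddAbove S1 := by
    refine ⟨Fintype.card (Sym2 V), ?_⟩
    rintro n ⟨M, hM, rfl⟩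
    obtain ⟨_, h2, _⟩ := lift_induced_matching G _ M hM
    calc M.card = _ := h2.symm
      _ ≤ _ := Finset.card_le_univ _
  have hmem : indMatchNum (G.induce (closedNbhd G x)ᶜ) ∈ S1 :=
    Nat.sSup_mem (indMatch_set_nonempty _) hbdd1
  obtain ⟨M, hM, hcard⟩ := hmem
  obtain ⟨hMm, hMcard, hMvert⟩ := lift_induced_matching G _ M hM
  set M' := M.image (Sym2.map (Subtype.val : ((closedNbhd G x)ᶜ : Set V) → V)) with hM'
  -- vertices of M' avoid closedNbhd G x
  have hvert : ∀ e ∈ M', ∀ v ∈ e, v ∉ closedNbhd G x := by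
    intro e he v hv
    exact hMvert e he v hv
  have hxy_not : s(x, y) ∉ M' := by
    intro h
    exact hvert _ h x (Sym2.mem_mk_left x y) (Set.mem_insert x _)
  -- vertices of M' are nonadjacent to y, and differ from x,y
  have hnotadj : ∀ v : V, v ∉ closedNbhd G x → ¬ G.Adj y v ∧ ¬ G.Adj x v ∧ v ≠ x ∧ v ≠ y := by
    intro v hvc
    have hvx : v ≠ x := fun h => hvc (by rw [h]; exact Set.mem_insert x _)
    have hax : ¬ G.Adj x v := fun h => hvc (Set.mem_insert_of_mem _ h)
    have hay : ¬ G.Adj y v := fun h => hvc (hsub (Set.mem_insert_of_mem _ h))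
    have hvy : v ≠ y := fun h => hvc (hsub (by rw [h]; exact Set.mem_insert y _))
    exact ⟨hay, hax, hvx, hvy⟩
  obtain ⟨⟨hedge, hdisj⟩, hind⟩ := hMm
  have hnew : IsInducedMatching G (insert s(x, y) M') := by
    constructor
    · constructor
      · intro e he
        rcases Finset.mem_insert.mp he with rfl | he
        · exact hadjxy
        · exact hedge e he
      · intro e he f hf hne v hve hvf
        rcases Finset.mem_insert.mp he with rfl | he <;>
          rcases Finset.mem_insert.mp hf with rfl | hf
        · exact hne rfl
        · -- e = s(x,y), f ∈ M'
          have hvc : v ∉ closedNbhd G x := hvert f hf v hvf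
          rcases Sym2.mem_iff.mp hve with rfl | rfl
          · exact (hnotadj v hvc).2.2.1 rfl
          · exact (hnotadj v hvc).2.2.2 rfl
        · have hvc : v ∉ closedNbhd G x := hvert e he v hve
          rcases Sym2.mem_iff.mp hvf with rfl | rfl
          · exact (hnotadj v hvc).2.2.1 rfl
          · exact (hnotadj v hvc).2.2.2 rfl
        · exact hdisj e he f hf hne v hve hvf
    · intro e he f hf hne u hue v hvf
      rcases Finset.mem_insert.mp he with rfl | he <;>
        rcases Finset.mem_insert.mp hf with rfl | hf
      · exact absurd rfl hne
      · have hvc : v ∉ closedNbhd G x := hvert f hf v hvf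
        rcases Sym2.mem_iff.mp hue with rfl | rfl
        · exact (hnotadj v hvc).2.1
        · exact (hnotadj v hvc).1
      · have huc : u ∉ closedNbhd G x := hvert e he u hue
        rcases Sym2.mem_iff.mp hvf with rfl | rfl
        · exact fun h => (hnotadj u huc).2.1 h.symm
        · exact fun h => (hnotadj u huc).1 h.symm
      · exact hind e he f hf hne u hue v hvf
  have hcard' : (insert s(x, y) M').card = indMatchNum (G.induce (closedNbhd G x)ᶜ) + 1 := by
    rw [Finset.card_insert_of_notMem hxy_not, hMcard, hcard]
  have : indMatchNum (G.induce (closedNbhd G x)ᶜ) + 1 ≤ indMatchNum G :=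
    le_csSup (indMatch_set_bdd G) ⟨_, hnew, hcard'⟩
  omega
end

section
/- Let G be a graph with im(G) = m(G), and let x be a vertex of G such that some vertex y has N_G(y) = {x}. Then im(G − x) = m(G − x) = im(G) − 1. -/
open SimpleGraph

variable {V : Type*}

section Aux

variable [Fintype V] (G : SimpleGraph V)

lemma matchBdd : BddAbove {n | ∃ M : Finset (Sym2 V), IsMatchingSet G M ∧ M.card = n} := by
  classical
  refine ⟨Fintype.card (Sym2 V), ?_⟩
  rintro n ⟨M, -, rfl⟩
  exact Finset.card_le_univ M

lemma indBdd : BddAbove {n | ∃ M : Finset (Sym2 V), IsInducedMatching G M ∧ M.card = n} :=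
  (matchBdd G).mono (by rintro n ⟨M, hM, rfl⟩; exact ⟨M, hM.1, rfl⟩)

lemma empty_matching : IsMatchingSet G (∅ : Finset (Sym2 V)) := by
  constructor <;> simp

lemma empty_ind : IsInducedMatching G (∅ : Finset (Sym2 V)) := by
  refine ⟨empty_matching G, by simp⟩

lemma matchNum_mem : ∃ M : Finset (Sym2 V), IsMatchingSet G M ∧ M.card = matchNum G :=
  Nat.sSup_mem ⟨0, Set.mem_setOf_eq ▸ ⟨∅, empty_matching G, rfl⟩⟩ (matchBdd G)

lemma indMatchNum_mem : ∃ M : Finset (Sym2 V), IsInducedMatching G M ∧ M.card = indMatchNum G :=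
  Nat.sSup_mem ⟨0, Set.mem_setOf_eq ▸ ⟨∅, empty_ind G, rfl⟩⟩ (indBdd G)

lemma le_matchNum {M : Finset (Sym2 V)} (h : IsMatchingSet G M) : M.card ≤ matchNum G :=
  le_csSup (matchBdd G) ⟨M, h, rfl⟩

lemma le_indMatchNum {M : Finset (Sym2 V)} (h : IsInducedMatching G M) :
    M.card ≤ indMatchNum G :=
  le_csSup (indBdd G) ⟨M, h, rfl⟩

lemma indMatchNum_le_matchNum : indMatchNum G ≤ matchNum G := by
  obtain ⟨M, hM, hc⟩ := indMatchNum_mem G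
  exact hc ▸ le_matchNum G hM.1

end Aux

section Transfer

variable [DecidableEq V] {G : SimpleGraph V} {S : Set V}

lemma push_mem {e' : Sym2 ↥S} {v : V} :
    v ∈ Sym2.map (Subtype.val) e' ↔ ∃ a : ↥S, a ∈ e' ∧ ↑a = v := Sym2.mem_map

lemma push_isMatching {M' : Finset (Sym2 ↥S)} (h : IsMatchingSet (G.induce S) M') :
    IsMatchingSet G (M'.image (Sym2.map Subtype.val)) := by
  constructor
  · intro e he
    simp only [Finset.mem_image] at he
    obtain ⟨e', he', rfl⟩ := he
    induction e' using Sym2.ind with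
    | _ a b =>
      have := h.1 _ he'
      simp only [SimpleGraph.mem_edgeSet, comap_adj] at this
      simpa [Sym2.map_pair_eq, SimpleGraph.mem_edgeSet] using this
  · intro e he f hf hef v hv hvf
    simp only [Finset.mem_image] at he hf
    obtain ⟨e', he', rfl⟩ := he
    obtain ⟨f', hf', rfl⟩ := hf
    have hef' : e' ≠ f' := fun hh => hef (by rw [hh])
    obtain ⟨a, ha, rfl⟩ := push_mem.mp hv
    obtain ⟨b, hb, hab⟩ := push_mem.mp hvf
    have : a = b := Subtype.ext hab.symm
    exact h.2 _ he' _ hf' hef' a ha (this ▸ hb)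

lemma push_card {M' : Finset (Sym2 ↥S)} :
    (M'.image (Sym2.map Subtype.val)).card = M'.card :=
  Finset.card_image_of_injective _ (Sym2.map.injective Subtype.val_injective)

lemma push_vmem {M' : Finset (Sym2 ↥S)} :
    ∀ e ∈ M'.image (Sym2.map Subtype.val), ∀ v ∈ e, v ∈ S := by
  intro e he v hv
  simp only [Finset.mem_image] at he
  obtain ⟨e', he', rfl⟩ := he
  obtain ⟨a, _, rfl⟩ := push_mem.mp hv
  exact a.2

lemma push_isInduced {M' : Finset (Sym2 ↥S)} (h : IsInducedMatching (G.induce S) M') :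
    IsInducedMatching G (M'.image (Sym2.map Subtype.val)) := by
  refine ⟨push_isMatching h.1, ?_⟩
  intro e he f hf hef u hu v hv hadj
  simp only [Finset.mem_image] at he hf
  obtain ⟨e', he', rfl⟩ := he
  obtain ⟨f', hf', rfl⟩ := hf
  have hef' : e' ≠ f' := fun hh => hef (by rw [hh])
  obtain ⟨a, ha, rfl⟩ := push_mem.mp hu
  obtain ⟨b, hb, rfl⟩ := push_mem.mp hv
  exact h.2 _ he' _ hf' hef' a ha b hb (by simpa using hadj)

lemma pull_exists {M : Finset (Sym2 V)} (hne : S.Nonempty) (h : IsMatchingSet G M)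
    (hmem : ∀ e ∈ M, ∀ v ∈ e, v ∈ S) :
    ∃ M' : Finset (Sym2 ↥S), IsMatchingSet (G.induce S) M' ∧ M'.card = M.card ∧
      (IsInducedMatching G M → IsInducedMatching (G.induce S) M') := by
  classical
  obtain ⟨s₀, hs₀⟩ := hne
  set f : V → ↥S := fun v => if h : v ∈ S then ⟨v, h⟩ else ⟨s₀, hs₀⟩ with hf
  have hround : ∀ e : Sym2 V, (∀ v ∈ e, v ∈ S) →
      Sym2.map Subtype.val (Sym2.map f e) = e := by
    intro e he
    induction e using Sym2.ind with
    | _ a b =>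
      have ha : a ∈ S := he a (by simp)
      have hb : b ∈ S := he b (by simp)
      simp [hf, Sym2.map_pair_eq, dif_pos ha, dif_pos hb]
  have hmemb : ∀ e : Sym2 V, (∀ v ∈ e, v ∈ S) →
      ∀ v' : ↥S, v' ∈ Sym2.map f e → (v' : V) ∈ e := by
    intro e he v' hv'
    obtain ⟨a, ha, rfl⟩ := Sym2.mem_map.mp hv'
    have haS := he a ha
    simp only [hf]
    rw [dif_pos haS]
    exact ha
  have hedge : ∀ e ∈ M, Sym2.map f e ∈ (G.induce S).edgeSet := by
    intro e he
    have h1 := h.1 e he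
    have h2 := hmem e he
    induction e using Sym2.ind with
    | _ a b =>
      have ha : a ∈ S := h2 a (by simp)
      have hb : b ∈ S := h2 b (by simp)
      rw [SimpleGraph.mem_edgeSet] at h1
      simp [hf, Sym2.map_pair_eq, SimpleGraph.mem_edgeSet, dif_pos ha, dif_pos hb, h1]
  have hinj : Set.InjOn (Sym2.map f) ↑M := by
    intro e he g hg hfg
    rw [← hround e (hmem e he), ← hround g (hmem g hg), hfg]
  refine ⟨M.image (Sym2.map f), ⟨?_, ?_⟩, Finset.card_image_of_injOn hinj, ?_⟩
  · intro e' he'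
    simp only [Finset.mem_image] at he'
    obtain ⟨e, he, rfl⟩ := he'
    exact hedge e he
  · intro e' he' f' hf' hne' v' hv' hv'f
    simp only [Finset.mem_image] at he' hf'
    obtain ⟨e, he, rfl⟩ := he'
    obtain ⟨g, hg, rfl⟩ := hf'
    have hneq : e ≠ g := fun hh => hne' (by rw [hh])
    exact h.2 e he g hg hneq _ (hmemb e (hmem e he) v' hv') (hmemb g (hmem g hg) v' hv'f)
  · intro hInd
    refine ⟨⟨?_, ?_⟩, ?_⟩
    · intro e' he'
      simp only [Finset.mem_image] at he'
      obtain ⟨e, he, rfl⟩ := he'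
      exact hedge e he
    · intro e' he' f' hf' hne' v' hv' hv'f
      simp only [Finset.mem_image] at he' hf'
      obtain ⟨e, he, rfl⟩ := he'
      obtain ⟨g, hg, rfl⟩ := hf'
      have hneq : e ≠ g := fun hh => hne' (by rw [hh])
      exact h.2 e he g hg hneq _ (hmemb e (hmem e he) v' hv') (hmemb g (hmem g hg) v' hv'f)
    · intro e' he' f' hf' hne' u' hu' v' hv' hadj
      simp only [Finset.mem_image] at he' hf'
      obtain ⟨e, he, rfl⟩ := he'
      obtain ⟨g, hg, rfl⟩ := hf'
      have hneq : e ≠ g := fun hh => hne' (by rw [hh])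
      exact hInd.2 e he g hg hneq _ (hmemb e (hmem e he) u' hu') _
        (hmemb g (hmem g hg) v' hv') (by simpa using hadj)

end Transfer


/-- if `im(G) = m(G)` and `N_G(y) = {x}`, then
`im(G - x) = m(G - x) = im(G) - 1`. -/
theorem indMatchNum_del_support_of_pendant [Fintype V] (G : SimpleGraph V)
    (x y : V) (him : indMatchNum G = matchNum G)
    (hy : G.neighborSet y = {x}) :
    indMatchNum (G.induce {x}ᶜ) = matchNum (G.induce {x}ᶜ) ∧
      matchNum (G.induce {x}ᶜ) = indMatchNum G - 1 := by
  --
  classical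
  set S : Set V := {x}ᶜ with hS
  have hyx : G.Adj y x := by
    have : x ∈ G.neighborSet y := by rw [hy]; exact Set.mem_singleton x
    exact (SimpleGraph.mem_neighborSet G y x).mp this
  have hxy : G.Adj x y := hyx.symm
  have hne : y ≠ x := G.ne_of_adj hyx
  have hSne : S.Nonempty := ⟨y, by simp [hS, hne]⟩
  have keyY : ∀ v, G.Adj y v → v = x := by
    intro v hv
    have : v ∈ G.neighborSet y := hv
    rw [hy] at this; exact this
  have keyE : ∀ e ∈ G.edgeSet, y ∈ e → x ∈ e := by
    intro e he hye
    have h1 : s(y, Sym2.Mem.other hye) = e := Sym2.other_spec hye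
    have h2 : G.Adj y (Sym2.Mem.other hye) :=
      (SimpleGraph.mem_edgeSet G).mp (by rw [h1]; exact he)
    have h3 := keyY _ h2
    rw [← h1, h3]
    simp
  have hxyne : x ≠ y := fun h => hne h.symm
  obtain ⟨M, hM, hMc⟩ := matchNum_mem G
  have step1 : ∃ N : Finset (Sym2 V), IsMatchingSet G N ∧ N.card = matchNum G ∧ s(x,y) ∈ N := by
    by_cases hycov : ∃ e ∈ M, y ∈ e
    · obtain ⟨e, heM, hye⟩ := hycov
      have hxe : x ∈ e := keyE e (hM.1 e heM) hye
      have he' : e = s(x,y) := ((Sym2.mem_and_mem_iff hxyne).mp ⟨hxe, hye⟩)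
      exact ⟨M, hM, hMc, he' ▸ heM⟩
    · push_neg at hycov
      by_cases hxcov : ∃ e ∈ M, x ∈ e
      · obtain ⟨e, heM, hxe⟩ := hxcov
        refine ⟨insert s(x,y) (M.erase e), ⟨?_, ?_⟩, ?_, Finset.mem_insert_self _ _⟩
        · intro f hf
          rcases Finset.mem_insert.mp hf with rfl | hf
          · exact hxy
          · exact hM.1 f (Finset.mem_of_mem_erase hf)
        · intro f hf g hg hfg v hvf hvg
          rcases Finset.mem_insert.mp hf with rfl | hf <;>
            rcases Finset.mem_insert.mp hg with rfl | hg
          · exact hfg rfl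
          · have hgM := Finset.mem_of_mem_erase hg
            have hgne : g ≠ e := Finset.ne_of_mem_erase hg
            rcases Sym2.mem_iff.mp hvf with h | h
            · exact hM.2 e heM g hgM (fun hh => hgne hh.symm) v (by rw [h]; exact hxe) hvg
            · exact hycov g hgM (by rwa [h] at hvg)
          · have hfM := Finset.mem_of_mem_erase hf
            have hfne : f ≠ e := Finset.ne_of_mem_erase hf
            rcases Sym2.mem_iff.mp hvg with h | h
            · exact hM.2 e heM f hfM (fun hh => hfne hh.symm) v (by rw [h]; exact hxe) hvf
            · exact hycov f hfM (by rwa [h] at hvf)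
          · exact hM.2 f (Finset.mem_of_mem_erase hf) g (Finset.mem_of_mem_erase hg) hfg v hvf hvg
        · have hnm : s(x,y) ∉ M.erase e := fun h =>
            hycov _ (Finset.mem_of_mem_erase h) (by simp)
          rw [Finset.card_insert_of_notMem hnm, Finset.card_erase_of_mem heM]
          have := Finset.card_pos.mpr ⟨e, heM⟩
          omega
      · push_neg at hxcov
        exfalso
        have hnm : s(x,y) ∉ M := fun h => hycov _ h (by simp)
        have hbig : IsMatchingSet G (insert s(x,y) M) := by
          constructor
          · intro f hf
            rcases Finset.mem_insert.mp hf with rfl | hf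
            · exact hxy
            · exact hM.1 f hf
          · intro f hf g hg hfg v hvf hvg
            rcases Finset.mem_insert.mp hf with rfl | hf <;>
              rcases Finset.mem_insert.mp hg with rfl | hg
            · exact hfg rfl
            · rcases Sym2.mem_iff.mp hvf with h | h
              · exact hxcov g hg (by rwa [h] at hvg)
              · exact hycov g hg (by rwa [h] at hvg)
            · rcases Sym2.mem_iff.mp hvg with h | h
              · exact hxcov f hf (by rwa [h] at hvf)
              · exact hycov f hf (by rwa [h] at hvf)
            · exact hM.2 f hf g hg hfg v hvf hvg
        have := le_matchNum G hbig
        rw [Finset.card_insert_of_notMem hnm, hMc] at this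
        omega
  obtain ⟨N, hN, hNc, hxyN⟩ := step1
  have hm1 : 1 ≤ matchNum G := hNc ▸ Finset.card_pos.mpr ⟨_, hxyN⟩
  have low : matchNum G - 1 ≤ matchNum (G.induce S) := by
    have hsub : IsMatchingSet G (N.erase s(x,y)) :=
      ⟨fun e he => hN.1 e (Finset.mem_of_mem_erase he),
       fun e he f hf => hN.2 e (Finset.mem_of_mem_erase he) f (Finset.mem_of_mem_erase hf)⟩
    have hv : ∀ e ∈ N.erase s(x,y), ∀ v ∈ e, v ∈ S := by
      intro e he v hv
      simp only [hS, Set.mem_compl_iff, Set.mem_singleton_iff]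
      intro hvx
      exact hN.2 e (Finset.mem_of_mem_erase he) s(x,y) hxyN (Finset.ne_of_mem_erase he)
        v hv (by rw [hvx]; simp)
    obtain ⟨M', hM', hc', -⟩ := pull_exists hSne hsub hv
    have := le_matchNum _ hM'
    rw [hc', Finset.card_erase_of_mem hxyN, hNc] at this
    exact this
  have up : matchNum (G.induce S) + 1 ≤ matchNum G := by
    obtain ⟨M', hM', hc'⟩ := matchNum_mem (G.induce S)
    set N2 := M'.image (Sym2.map Subtype.val) with hN2def
    have hN2 := push_isMatching hM'
    have hvS : ∀ e ∈ N2, ∀ v ∈ e, v ∈ S := push_vmem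
    have hxnot : ∀ e ∈ N2, x ∉ e := by
      intro e he hx
      have := hvS e he x hx
      simp [hS] at this
    have hnotmem : s(x,y) ∉ N2 := fun h => hxnot _ h (by simp)
    have hbig : IsMatchingSet G (insert s(x,y) N2) := by
      constructor
      · intro e he
        rcases Finset.mem_insert.mp he with rfl | he
        · exact hxy
        · exact hN2.1 e he
      · intro e he f hf hef v hve hvf
        rcases Finset.mem_insert.mp he with rfl | he <;>
          rcases Finset.mem_insert.mp hf with rfl | hf
        · exact hef rfl
        · rcases Sym2.mem_iff.mp hve with h | h
          · exact hxnot f hf (by rwa [h] at hvf)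
          · exact hxnot f hf (keyE f (hN2.1 f hf) (by rwa [h] at hvf))
        · rcases Sym2.mem_iff.mp hvf with h | h
          · exact hxnot e he (by rwa [h] at hve)
          · exact hxnot e he (keyE e (hN2.1 e he) (by rwa [h] at hve))
        · exact hN2.2 e he f hf hef v hve hvf
    have := le_matchNum G hbig
    rw [Finset.card_insert_of_notMem hnotmem, push_card, hc'] at this
    exact this
  have low2 : indMatchNum G - 1 ≤ indMatchNum (G.induce S) := by
    obtain ⟨P, hP, hPc⟩ := indMatchNum_mem G
    by_cases hxcov : ∃ e ∈ P, x ∈ e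
    · obtain ⟨e0, he0, hxe0⟩ := hxcov
      have hPsub : ∀ f ∈ P.erase e0, f ∈ P := fun f hf => Finset.mem_of_mem_erase hf
      have hP0 : IsInducedMatching G (P.erase e0) :=
        ⟨⟨fun f hf => hP.1.1 f (hPsub f hf),
          fun a ha b hb => hP.1.2 a (hPsub a ha) b (hPsub b hb)⟩,
         fun a ha b hb => hP.2 a (hPsub a ha) b (hPsub b hb)⟩
      have hv : ∀ f ∈ P.erase e0, ∀ v ∈ f, v ∈ S := by
        intro f hf v hv
        simp only [hS, Set.mem_compl_iff, Set.mem_singleton_iff]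
        intro hvx
        exact hP.1.2 f (hPsub f hf) e0 he0 (Finset.ne_of_mem_erase hf) v hv (by rwa [← hvx] at hxe0)
      obtain ⟨M', hM', hc', hind⟩ := pull_exists hSne hP0.1 hv
      have := le_indMatchNum _ (hind hP0)
      rw [hc', Finset.card_erase_of_mem he0, hPc] at this
      exact this
    · push_neg at hxcov
      have hv : ∀ f ∈ P, ∀ v ∈ f, v ∈ S := by
        intro f hf v hv
        simp only [hS, Set.mem_compl_iff, Set.mem_singleton_iff]
        intro hvx
        exact hxcov f hf (by rwa [← hvx])
      obtain ⟨M', hM', hc', hind⟩ := pull_exists hSne hP.1 hv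
      have := le_indMatchNum _ (hind hP)
      rw [hc', hPc] at this
      omega
  have t1 : indMatchNum (G.induce S) ≤ matchNum (G.induce S) := indMatchNum_le_matchNum _
  constructor
  · omega
  · omega
end

section
/- If G is a graph with im(G) = m(G) > 1, then every edge in a maximum induced matching of G is either a pendant edge or a triangle edge. -/
open SimpleGraph

variable {V : Type*}

lemma matchSet_bddAbove [Fintype V] (G : SimpleGraph V) :
    BddAbove {n | ∃ M : Finset (Sym2 V), IsMatchingSet G M ∧ M.card = n} := by
  classical
  refine ⟨Fintype.card (Sym2 V), ?_⟩
  rintro n ⟨M, -, rfl⟩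
  exact Finset.card_le_univ M

lemma card_le_matchNum [Fintype V] (G : SimpleGraph V) {M : Finset (Sym2 V)}
    (h : IsMatchingSet G M) : M.card ≤ matchNum G :=
  le_csSup (matchSet_bddAbove G) ⟨M, h, rfl⟩

lemma no_extend [Fintype V] (G : SimpleGraph V) {M : Finset (Sym2 V)}
    (hM : IsInducedMatching G M) {u v u' v' : V} (he : s(u, v) ∈ M)
    (h1 : G.Adj u u') (h2 : G.Adj v v') (hu'v : u' ≠ v) (hv'u : v' ≠ u)
    (hu'v' : u' ≠ v') (hmm : M.card = matchNum G) : False := by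
  classical
  set e : Sym2 V := s(u, v) with hedef
  have huv : G.Adj u v := (SimpleGraph.mem_edgeSet G).mp (hM.1.1 e he)
  have key : ∀ f ∈ M.erase e, u ∉ f ∧ v ∉ f ∧ u' ∉ f ∧ v' ∉ f := by
    intro f hf
    have hfM := Finset.mem_of_mem_erase hf
    have hfe : e ≠ f := (Finset.ne_of_mem_erase hf).symm
    refine ⟨hM.1.2 e he f hfM hfe u (by simp [hedef]),
      hM.1.2 e he f hfM hfe v (by simp [hedef]), ?_, ?_⟩
    · intro h
      exact hM.2 e he f hfM hfe u (by simp [hedef]) u' h h1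
    · intro h
      exact hM.2 e he f hfM hfe v (by simp [hedef]) v' h h2
  have hne_edges : s(u, u') ≠ s(v, v') := by
    intro h
    rw [Sym2.eq_iff] at h
    rcases h with ⟨h, -⟩ | ⟨h, -⟩
    · exact huv.ne h
    · exact hv'u h.symm
  set M' : Finset (Sym2 V) := insert s(u, u') (insert s(v, v') (M.erase e)) with hM'def
  have h2mem : s(v, v') ∉ M.erase e := fun h => (key _ h).2.1 (by simp)
  have h1mem : s(u, u') ∉ insert s(v, v') (M.erase e) := by
    simp only [Finset.mem_insert]
    rintro (h | h)
    · exact hne_edges h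
    · exact (key _ h).1 (by simp)
  have hcard' : M'.card = M.card + 1 := by
    rw [hM'def, Finset.card_insert_of_notMem h1mem,
      Finset.card_insert_of_notMem h2mem, Finset.card_erase_of_mem he]
    have : 1 ≤ M.card := Finset.card_pos.2 ⟨e, he⟩
    omega
  have hmatch : IsMatchingSet G M' := by
    constructor
    · intro f hf
      rw [hM'def] at hf
      simp only [Finset.mem_insert] at hf
      rcases hf with rfl | rfl | hf
      · exact (SimpleGraph.mem_edgeSet G).mpr h1
      · exact (SimpleGraph.mem_edgeSet G).mpr h2
      · exact hM.1.1 f (Finset.mem_of_mem_erase hf)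
    · intro f hf g hg hfg x hxf
      rw [hM'def] at hf hg
      simp only [Finset.mem_insert] at hf hg
      rcases hf with rfl | rfl | hf <;> rcases hg with rfl | rfl | hg
      · exact absurd rfl hfg
      · simp only [Sym2.mem_iff] at hxf ⊢
        rcases hxf with rfl | rfl
        · push_neg; exact ⟨huv.ne, hv'u.symm⟩
        · push_neg; exact ⟨hu'v, hu'v'⟩
      · simp only [Sym2.mem_iff] at hxf
        rcases hxf with rfl | rfl
        · exact (key _ hg).1
        · exact (key _ hg).2.2.1
      · simp only [Sym2.mem_iff] at hxf ⊢
        rcases hxf with rfl | rfl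
        · push_neg; exact ⟨huv.ne', hu'v.symm⟩
        · push_neg; exact ⟨hv'u, hu'v'.symm⟩
      · exact absurd rfl hfg
      · simp only [Sym2.mem_iff] at hxf
        rcases hxf with rfl | rfl
        · exact (key _ hg).2.1
        · exact (key _ hg).2.2.2
      · simp only [Sym2.mem_iff]
        push_neg
        exact ⟨fun h => (key _ hf).1 (h ▸ hxf), fun h => (key _ hf).2.2.1 (h ▸ hxf)⟩
      · simp only [Sym2.mem_iff]
        push_neg
        exact ⟨fun h => (key _ hf).2.1 (h ▸ hxf), fun h => (key _ hf).2.2.2 (h ▸ hxf)⟩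
      · exact hM.1.2 f (Finset.mem_of_mem_erase hf) g (Finset.mem_of_mem_erase hg) hfg x hxf
  have := card_le_matchNum G hmatch
  omega

/-- if `im(G) = m(G) > 1`, every edge of a maximum induced matching
is a pendant edge or a triangle edge. -/
theorem max_induced_matching_pendant_or_triangle [Fintype V] (G : SimpleGraph V)
    (him : indMatchNum G = matchNum G) (hm : 1 < matchNum G)
    (M : Finset (Sym2 V)) (hM : IsInducedMatching G M)
    (hcard : M.card = indMatchNum G) :
    ∀ e ∈ M,
      (∃ u v : V, e = s(u, v) ∧ G.Adj u v ∧
        ((G.neighborSet u).ncard = 1 ∨ (G.neighborSet v).ncard = 1)) ∨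
      (∃ u v w : V, e = s(u, v) ∧ G.Adj u v ∧
        (G.neighborSet u).ncard = 2 ∧ (G.neighborSet v).ncard = 2 ∧
        G.Adj u w ∧ G.Adj v w) := by
  classical
  intro e
  induction e using Sym2.ind with
  | _ u v =>
  intro he
  have hmm : M.card = matchNum G := by rw [hcard, him]
  have hadj : G.Adj u v := (SimpleGraph.mem_edgeSet G).mp (hM.1.1 _ he)
  by_cases hp : ∀ x, G.Adj u x → x = v
  · left
    refine ⟨u, v, rfl, hadj, Or.inl ?_⟩
    have : G.neighborSet u = {v} :=
      Set.eq_singleton_iff_unique_mem.mpr ⟨hadj, fun x hx => hp x hx⟩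
    rw [this, Set.ncard_singleton]
  by_cases hq : ∀ x, G.Adj v x → x = u
  · left
    refine ⟨u, v, rfl, hadj, Or.inr ?_⟩
    have : G.neighborSet v = {u} :=
      Set.eq_singleton_iff_unique_mem.mpr ⟨hadj.symm, fun x hx => hq x hx⟩
    rw [this, Set.ncard_singleton]
  push_neg at hp hq
  obtain ⟨u', hu'adj, hu'v⟩ := hp
  obtain ⟨v', hv'adj, hv'u⟩ := hq
  have claim : ∀ a, G.Adj u a → a ≠ v → ∀ b, G.Adj v b → b ≠ u → a = b := by
    intro a ha hav b hb hbu
    by_contra h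
    exact no_extend G hM he ha hb hav hbu h hmm
  have hw : u' = v' := claim u' hu'adj hu'v v' hv'adj hv'u
  have hadj_vw : G.Adj v u' := hw ▸ hv'adj
  have hNu : G.neighborSet u = {v, u'} := by
    ext x
    simp only [SimpleGraph.mem_neighborSet, Set.mem_insert_iff, Set.mem_singleton_iff]
    constructor
    · intro hx
      by_cases hxv : x = v
      · exact Or.inl hxv
      · exact Or.inr (claim x hx hxv u' hadj_vw hu'adj.ne')
    · rintro (rfl | rfl)
      · exact hadj
      · exact hu'adj
  have hNv : G.neighborSet v = {u, u'} := by
    ext x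
    simp only [SimpleGraph.mem_neighborSet, Set.mem_insert_iff, Set.mem_singleton_iff]
    constructor
    · intro hx
      by_cases hxu : x = u
      · exact Or.inl hxu
      · exact Or.inr (claim u' hu'adj hu'v x hx hxu).symm
    · rintro (rfl | rfl)
      · exact hadj.symm
      · exact hadj_vw
  right
  refine ⟨u, v, u', rfl, hadj, ?_, ?_, hu'adj, hadj_vw⟩
  · rw [hNu, Set.ncard_pair (hu'v.symm : v ≠ u')]
  · rw [hNv, Set.ncard_pair hu'adj.ne]
end

section
/- If G is a graph with im(G) = m(G), then G is codismantlable. -/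
open SimpleGraph

variable {V : Type*}

private lemma codisOn_of_pairs [DecidableEq V] (G : SimpleGraph V) (A : Finset V) :
    (∃ R : V → V → Prop,
      (∀ a b, R a b → a ∈ A ∧ b ∈ A ∧ G.Adj a b ∧ ∀ z ∈ A, G.Adj b z → z = a ∨ G.Adj a z) ∧
      (∀ u ∈ A, ∀ v ∈ A, G.Adj u v → (∃ y, R u y) ∨ (∃ y, R v y)) ∧
      (∀ a b, R a b → ∀ c d, R c d → a ≠ d)) →
    CodismantlableOn G A := by
  induction A using Finset.strongInduction with
  | _ A ih =>
    rintro ⟨R, h1, h2, h3⟩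
    rw [CodismantlableOn]
    by_cases hE : ∀ x ∈ A, ∀ y ∈ A, ¬ G.Adj x y
    · exact Or.inl hE
    right
    push_neg at hE
    obtain ⟨u, hu, v, hv, huv⟩ := hE
    have hpair : ∃ c y, R c y := by
      rcases h2 u hu v hv huv with ⟨y, hy⟩ | ⟨y, hy⟩
      exacts [⟨u, y, hy⟩, ⟨v, y, hy⟩]
    obtain ⟨c, y, hcy⟩ := hpair
    obtain ⟨hcA, hyA, hadj, hdom⟩ := h1 c y hcy
    refine ⟨c, hcA, ⟨y, hyA, hadj.ne', ?_⟩, ?_⟩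
    · intro z hz hcase
      rcases hcase with rfl | hzy
      · exact Or.inr hadj
      · exact hdom z hz hzy
    · apply ih (A.erase c) (Finset.erase_ssubset hcA)
      refine ⟨fun a b => R a b ∧ a ≠ c, ?_, ?_, ?_⟩
      · rintro a b ⟨hab, hac⟩
        obtain ⟨ha, hb, hadj', hdom'⟩ := h1 a b hab
        have hbc : b ≠ c := (h3 c y hcy a b hab).symm
        refine ⟨Finset.mem_erase.mpr ⟨hac, ha⟩, Finset.mem_erase.mpr ⟨hbc, hb⟩, hadj', ?_⟩
        intro z hz hbz
        exact hdom' z (Finset.mem_of_mem_erase hz) hbz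
      · intro u' hu' v' hv' huv'
        obtain ⟨hu'c, hu'A⟩ := Finset.mem_erase.mp hu'
        obtain ⟨hv'c, hv'A⟩ := Finset.mem_erase.mp hv'
        rcases h2 u' hu'A v' hv'A huv' with ⟨y', hy'⟩ | ⟨y', hy'⟩
        · exact Or.inl ⟨y', hy', hu'c⟩
        · exact Or.inr ⟨y', hy', hv'c⟩
      · rintro a b ⟨hab, _⟩ c' d ⟨hcd, _⟩
        exact h3 a b hab c' d hcd

private lemma exchange_aux [DecidableEq V] {G : SimpleGraph V} {M : Finset (Sym2 V)}
    (hM : IsMatchingSet G M) (hmax : ∀ N, IsMatchingSet G N → N.card ≤ M.card)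
    {a b u z : V} (he : s(a, b) ∈ M)
    (hu : ∀ g ∈ M, u ∉ g) (hz : ∀ g ∈ M, z ∉ g) (huz : u ≠ z)
    (hau : G.Adj a u) (hbz : G.Adj b z) : False := by
  have hab : G.Adj a b := (SimpleGraph.mem_edgeSet G).mp (hM.1 _ he)
  have hua : u ≠ a := fun h => hu _ he (Sym2.mem_iff.mpr (Or.inl h))
  have hub : u ≠ b := fun h => hu _ he (Sym2.mem_iff.mpr (Or.inr h))
  have hza : z ≠ a := fun h => hz _ he (Sym2.mem_iff.mpr (Or.inl h))
  have hzb : z ≠ b := fun h => hz _ he (Sym2.mem_iff.mpr (Or.inr h))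
  set N : Finset (Sym2 V) := insert s(a, u) (insert s(b, z) (M.erase s(a, b))) with hN
  have hne1 : (s(a, u) : Sym2 V) ≠ s(b, z) := by
    intro hq
    rcases Sym2.eq_iff.mp hq with ⟨rfl, rfl⟩ | ⟨rfl, rfl⟩
    · exact hab.ne rfl
    · exact hub rfl
  have hbz_not : (s(b, z) : Sym2 V) ∉ M.erase s(a, b) := fun hm =>
    hz _ (Finset.mem_of_mem_erase hm) (Sym2.mem_iff.mpr (Or.inr rfl))
  have hau_not : (s(a, u) : Sym2 V) ∉ insert s(b, z) (M.erase s(a, b)) := by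
    intro hm
    rcases Finset.mem_insert.mp hm with hm | hm
    · exact hne1 hm
    · exact hu _ (Finset.mem_of_mem_erase hm) (Sym2.mem_iff.mpr (Or.inr rfl))
  have dAU : ∀ g ∈ M.erase s(a, b), ∀ w, w ∈ (s(a, u) : Sym2 V) → w ∉ g := by
    intro g hg w hw
    obtain ⟨hg1, hg2⟩ := Finset.mem_erase.mp hg
    rcases Sym2.mem_iff.mp hw with rfl | rfl
    · exact hM.2 _ he _ hg2 (Ne.symm hg1) w (Sym2.mem_iff.mpr (Or.inl rfl))
    · exact hu g hg2
  have dBZ : ∀ g ∈ M.erase s(a, b), ∀ w, w ∈ (s(b, z) : Sym2 V) → w ∉ g := by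
    intro g hg w hw
    obtain ⟨hg1, hg2⟩ := Finset.mem_erase.mp hg
    rcases Sym2.mem_iff.mp hw with rfl | rfl
    · exact hM.2 _ he _ hg2 (Ne.symm hg1) w (Sym2.mem_iff.mpr (Or.inr rfl))
    · exact hz g hg2
  have dcross : ∀ w, w ∈ (s(a, u) : Sym2 V) → w ∉ (s(b, z) : Sym2 V) := by
    intro w hw hw'
    rcases Sym2.mem_iff.mp hw with rfl | rfl <;> rcases Sym2.mem_iff.mp hw' with h | h
    · exact hab.ne h
    · exact hza h.symm
    · exact hub h
    · exact huz h
  have key : IsMatchingSet G N := by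
    constructor
    · intro e heN
      rcases Finset.mem_insert.mp heN with rfl | heN
      · exact (SimpleGraph.mem_edgeSet G).mpr hau
      rcases Finset.mem_insert.mp heN with rfl | heN
      · exact (SimpleGraph.mem_edgeSet G).mpr hbz
      · exact hM.1 _ (Finset.mem_of_mem_erase heN)
    · intro e heN f hfN hef v hve
      rcases Finset.mem_insert.mp heN with rfl | heN
      · rcases Finset.mem_insert.mp hfN with rfl | hfN
        · exact absurd rfl hef
        rcases Finset.mem_insert.mp hfN with rfl | hfN
        · exact dcross v hve
        · exact dAU f hfN v hve
      rcases Finset.mem_insert.mp heN with rfl | heN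
      · rcases Finset.mem_insert.mp hfN with rfl | hfN
        · intro hvf
          exact dcross v hvf hve
        rcases Finset.mem_insert.mp hfN with rfl | hfN
        · exact absurd rfl hef
        · exact dBZ f hfN v hve
      · rcases Finset.mem_insert.mp hfN with rfl | hfN
        · intro hvf
          exact dAU e heN v hvf hve
        rcases Finset.mem_insert.mp hfN with rfl | hfN
        · intro hvf
          exact dBZ e heN v hvf hve
        · exact hM.2 e (Finset.mem_of_mem_erase heN) f (Finset.mem_of_mem_erase hfN) hef v hve
  have hcard : N.card = M.card + 1 := by
    rw [hN, Finset.card_insert_of_notMem hau_not, Finset.card_insert_of_notMem hbz_not,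
        Finset.card_erase_of_mem he]
    have : 1 ≤ M.card := Finset.card_pos.mpr ⟨_, he⟩
    omega
  have := hmax N key
  omega

/-- if `im(G) = m(G)` (in particular if `im(G) = reg(G) = m(G)`),
then `G` is codismantlable. -/
theorem codismantlable_of_im_eq_m [Fintype V] [DecidableEq V] (G : SimpleGraph V)
    (h : indMatchNum G = matchNum G) : Codismantlable G := by
  classical
  have hbdd_im : BddAbove {n | ∃ M : Finset (Sym2 V), IsInducedMatching G M ∧ M.card = n} := by
    refine ⟨Fintype.card (Sym2 V), ?_⟩
    rintro n ⟨M, _, rfl⟩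
    exact Finset.card_le_univ M
  have hbdd_m : BddAbove {n | ∃ M : Finset (Sym2 V), IsMatchingSet G M ∧ M.card = n} := by
    refine ⟨Fintype.card (Sym2 V), ?_⟩
    rintro n ⟨M, _, rfl⟩
    exact Finset.card_le_univ M
  have hne : {n | ∃ M : Finset (Sym2 V), IsInducedMatching G M ∧ M.card = n}.Nonempty :=
    ⟨0, ∅, ⟨⟨fun e he => absurd he (Finset.notMem_empty e),
      fun e he => absurd he (Finset.notMem_empty e)⟩,
      fun e he => absurd he (Finset.notMem_empty e)⟩, rfl⟩
  have hmem : indMatchNum G ∈ {n | ∃ M : Finset (Sym2 V), IsInducedMatching G M ∧ M.card = n} :=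
    Nat.sSup_mem hne hbdd_im
  obtain ⟨M, hMind, hMcard⟩ := hmem
  have hmax : ∀ N, IsMatchingSet G N → N.card ≤ M.card := by
    intro N hN
    have h1 : N.card ≤ matchNum G := le_csSup hbdd_m ⟨N, hN, rfl⟩
    rw [← h] at h1
    rw [hMcard]
    exact h1
  have hMatch : IsMatchingSet G M := hMind.1
  have hInd := hMind.2
  -- a vertex adjacent to a vertex of an M-edge, not in that edge, is in no M-edge
  have hfree : ∀ x y (e : Sym2 V), e ∈ M → y ∈ e → G.Adj x y → x ∉ e → ∀ g ∈ M, x ∉ g := by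
    intro x y e he hy hxy hxe g hg hxg
    by_cases hge : g = e
    · exact hxe (hge ▸ hxg)
    · exact hInd g hg e he hge x hxg y hy hxy
  -- orient each M-edge so that the second endpoint's closed nbhd is inside the first's
  have horient : ∀ e ∈ M, ∃ p : V × V, e = s(p.1, p.2) ∧ G.Adj p.1 p.2 ∧
      ∀ z, G.Adj p.2 z → z = p.1 ∨ G.Adj p.1 z := by
    intro e he
    induction e using Sym2.ind with
    | _ a b =>
      have hab : G.Adj a b := (SimpleGraph.mem_edgeSet G).mp (hMatch.1 _ he)
      by_cases hDab : ∀ z, G.Adj b z → z = a ∨ G.Adj a z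
      · exact ⟨(a, b), rfl, hab, hDab⟩
      by_cases hDba : ∀ z, G.Adj a z → z = b ∨ G.Adj b z
      · exact ⟨(b, a), Sym2.eq_swap.symm, hab.symm, hDba⟩
      exfalso
      push_neg at hDab hDba
      obtain ⟨z, hbz, hza, _⟩ := hDab
      obtain ⟨w, haw, hwb, hbw⟩ := hDba
      have hze : z ∉ (s(a, b) : Sym2 V) := by
        rw [Sym2.mem_iff]
        rintro (rfl | rfl)
        · exact hza rfl
        · exact hbz.ne rfl
      have hwe : w ∉ (s(a, b) : Sym2 V) := by
        rw [Sym2.mem_iff]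
        rintro (rfl | rfl)
        · exact haw.ne rfl
        · exact hwb rfl
      have hzf := hfree z b s(a, b) he (Sym2.mem_iff.mpr (Or.inr rfl)) hbz.symm hze
      have hwf := hfree w a s(a, b) he (Sym2.mem_iff.mpr (Or.inl rfl)) haw.symm hwe
      have hwz : w ≠ z := fun hwz => hbw (hwz ▸ hbz)
      exact exchange_aux hMatch hmax he hwf hzf hwz haw hbz
  choose p hp1 hp2 hp3 using horient
  have memAB : ∀ (x : V × V) (e : Sym2 V), e = s(x.1, x.2) → x.1 ∈ e ∧ x.2 ∈ e := by
    rintro x e rfl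
    exact ⟨Sym2.mem_iff.mpr (Or.inl rfl), Sym2.mem_iff.mpr (Or.inr rfl)⟩
  have memA : ∀ e (he : e ∈ M), (p e he).1 ∈ e := fun e he => (memAB _ e (hp1 e he)).1
  have memB : ∀ e (he : e ∈ M), (p e he).2 ∈ e := fun e he => (memAB _ e (hp1 e he)).2
  set isB : V → Prop := fun v => ∃ e, ∃ he : e ∈ M, (p e he).2 = v with hisBdef
  set R : V → V → Prop := fun u v =>
    ¬ isB u ∧ isB v ∧ G.Adj u v ∧ ∀ z, G.Adj v z → z = u ∨ G.Adj u z with hRdef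
  have aNotB : ∀ e (he : e ∈ M), ¬ isB (p e he).1 := by
    rintro e he ⟨f, hf, hpf⟩
    by_cases hfe : f = e
    · subst hfe
      exact (hp2 f hf).ne' hpf
    · exact hMatch.2 f hf e he hfe _ (memB f hf) (by rw [hpf]; exact memA e he)
  have wNotB : ∀ u, (∀ g ∈ M, u ∉ g) → ¬ isB u := by
    rintro u hfr ⟨f, hf, hpf⟩
    exact hfr f hf (hpf ▸ memB f hf)
  -- a free vertex adjacent to the second endpoint of an M-edge gives a pair
  have hWpair : ∀ u e (he : e ∈ M), (∀ g ∈ M, u ∉ g) → G.Adj u (p e he).2 → ∃ y, R u y := by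
    intro u e he hufree hub
    refine ⟨(p e he).2, wNotB u hufree, ⟨e, he, rfl⟩, hub, ?_⟩
    intro z hbz
    have hau : G.Adj (p e he).1 u := by
      rcases hp3 e he u hub.symm with h1 | h1
      · exact absurd (memA e he) (h1 ▸ hufree e he)
      · exact h1
    rcases hp3 e he z hbz with hz1 | haz
    · exact Or.inr (hz1 ▸ hau.symm)
    · by_cases hzu : z = u
      · exact Or.inl hzu
      exfalso
      have hze : z ∉ e := by
        rw [hp1 e he, Sym2.mem_iff]
        rintro (rfl | rfl)
        · exact haz.ne rfl
        · exact hbz.ne rfl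
      have hzfree := hfree z (p e he).2 e he (memB e he) hbz.symm hze
      exact exchange_aux hMatch hmax (show s((p e he).1, (p e he).2) ∈ M by
        rw [← hp1 e he]; exact he) hufree hzfree (fun h' => hzu h'.symm) hau hbz
  show CodismantlableOn G Finset.univ
  apply codisOn_of_pairs
  refine ⟨R, ?_, ?_, ?_⟩
  · rintro a b ⟨_, _, hadj, hdom⟩
    exact ⟨Finset.mem_univ a, Finset.mem_univ b, hadj, fun z _ hz => hdom z hz⟩
  · intro u _ v _ huv
    by_cases hau : ∃ e, ∃ he : e ∈ M, (p e he).1 = u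
    · obtain ⟨e, he, hpe⟩ := hau
      exact Or.inl ⟨(p e he).2, hpe ▸ aNotB e he, ⟨e, he, rfl⟩, hpe ▸ hp2 e he, hpe ▸ hp3 e he⟩
    by_cases hav : ∃ e, ∃ he : e ∈ M, (p e he).1 = v
    · obtain ⟨e, he, hpe⟩ := hav
      exact Or.inr ⟨(p e he).2, hpe ▸ aNotB e he, ⟨e, he, rfl⟩, hpe ▸ hp2 e he, hpe ▸ hp3 e he⟩
    by_cases huM : ∃ e, ∃ he : e ∈ M, u ∈ e
    · obtain ⟨e, he, hue⟩ := huM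
      have hub : u = (p e he).2 := by
        have h' : u ∈ s((p e he).1, (p e he).2) := hp1 e he ▸ hue
        rcases Sym2.mem_iff.mp h' with h1 | h2
        · exact absurd ⟨e, he, h1.symm⟩ hau
        · exact h2
      have hvne : v ∉ e := by
        intro hve
        have h' : v ∈ s((p e he).1, (p e he).2) := hp1 e he ▸ hve
        rcases Sym2.mem_iff.mp h' with h1 | h2
        · exact hav ⟨e, he, h1.symm⟩
        · exact huv.ne (hub.trans h2.symm)
      have hvfree : ∀ g ∈ M, v ∉ g := hfree v u e he hue huv.symm hvne
      exact Or.inr (hWpair v e he hvfree (hub ▸ huv.symm))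
    by_cases hvM : ∃ e, ∃ he : e ∈ M, v ∈ e
    · obtain ⟨e, he, hve⟩ := hvM
      have hvb : v = (p e he).2 := by
        have h' : v ∈ s((p e he).1, (p e he).2) := hp1 e he ▸ hve
        rcases Sym2.mem_iff.mp h' with h1 | h2
        · exact absurd ⟨e, he, h1.symm⟩ hav
        · exact h2
      have hufree : ∀ g ∈ M, u ∉ g := fun g hg hug => huM ⟨g, hg, hug⟩
      exact Or.inl (hWpair u e he hufree (hvb ▸ huv))
    · exfalso
      have hufree : ∀ g ∈ M, u ∉ g := fun g hg hug => huM ⟨g, hg, hug⟩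
      have hvfree : ∀ g ∈ M, v ∉ g := fun g hg hvg => hvM ⟨g, hg, hvg⟩
      have hnotmem : (s(u, v) : Sym2 V) ∉ M := fun hm =>
        huM ⟨_, hm, Sym2.mem_iff.mpr (Or.inl rfl)⟩
      have hbig : IsMatchingSet G (insert s(u, v) M) := by
        constructor
        · intro e he
          rcases Finset.mem_insert.mp he with rfl | he
          · exact (SimpleGraph.mem_edgeSet G).mpr huv
          · exact hMatch.1 e he
        · intro e heN f hfN hef w hwe
          rcases Finset.mem_insert.mp heN with rfl | he' <;>
            rcases Finset.mem_insert.mp hfN with rfl | hf'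
          · exact absurd rfl hef
          · rcases Sym2.mem_iff.mp hwe with rfl | rfl
            · exact hufree f hf'
            · exact hvfree f hf'
          · intro hwf
            rcases Sym2.mem_iff.mp hwf with rfl | rfl
            · exact huM ⟨e, he', hwe⟩
            · exact hvM ⟨e, he', hwe⟩
          · exact hMatch.2 e he' f hf' hef w hwe
      have := hmax _ hbig
      rw [Finset.card_insert_of_notMem hnotmem] at this
      omega
  · rintro a b ⟨hna, _, _, _⟩ c d ⟨_, hd, _, _⟩ rfl
    exact hna hd
end

section
/- If G is a connected graph with girth(G) ≥ 5, then the co-chordal cover number of G equals the domination number of the line graph of G: cochord(G) = γ(L(G)). -/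
open SimpleGraph

variable {V : Type*}

/-!
If `H` is a subgraph of a graph of girth at least five and `Hᶜ` is chordal, then `H` has no induced
`2K₂` (its complement is `C₄`) and no `5`-cycle (`C₅` is self-complementary); together with the
absence of triangles and `4`-cycles this excludes every path on five vertices. So if some edge of `H`
misses an edge `uv`, the `2K₂` condition produces a path on four vertices, and its middle edge meets
every edge of `H`. Conversely, if an edge `uv` meets every edge, then `Hᶜ` is a clique plus `u` and
`v`, which carries no induced cycle of length at least four. A co-chordal edge cover by `k`
subgraphs therefore yields `k` edges dominating `L(G)`, and the stars of the edges of a dominating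
set of `L(G)` form a co-chordal edge cover.
-/

namespace SimpleGraph

section Cochordal

variable {W : Type*} {K L : SimpleGraph W} {a b c d e : W}

lemma not_chordal_of_cycle4 (hab : L.Adj a b) (hbc : L.Adj b c) (hcd : L.Adj c d)
    (hda : L.Adj d a) (hac : Lᶜ.Adj a c) (hbd : Lᶜ.Adj b d) : ¬ Chordal L := by
  have hadj : ∀ i j, L.Adj (![a, b, c, d] i) (![a, b, c, d] j) ↔ (cycleGraph 4).Adj i j := by
    intro i j
    fin_cases i <;> fin_cases j <;>
      simp [hab, hbc, hcd, hda, hab.symm, hbc.symm, hcd.symm, hda.symm, hac.2, hbd.2,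
        mt L.adj_symm hac.2, mt L.adj_symm hbd.2] <;> decide
  have hinj : Function.Injective ![a, b, c, d] := by
    intro i j hij
    fin_cases i <;> fin_cases j <;>
      simp_all [hab.ne, hbc.ne, hcd.ne, hda.ne, hac.ne, hbd.ne, hab.ne', hbc.ne', hcd.ne',
        hda.ne', hac.ne', hbd.ne']
  exact fun hch => (hch 4 le_rfl).false ⟨⟨_, hinj⟩, hadj _ _⟩

lemma not_chordal_of_cycle5 (hab : L.Adj a b) (hbc : L.Adj b c) (hcd : L.Adj c d)
    (hde : L.Adj d e) (hea : L.Adj e a) (hac : Lᶜ.Adj a c) (had : Lᶜ.Adj a d)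
    (hbd : Lᶜ.Adj b d) (hbe : Lᶜ.Adj b e) (hce : Lᶜ.Adj c e) : ¬ Chordal L := by
  have hadj : ∀ i j, L.Adj (![a, b, c, d, e] i) (![a, b, c, d, e] j) ↔
      (cycleGraph 5).Adj i j := by
    intro i j
    fin_cases i <;> fin_cases j <;>
      simp [hab, hbc, hcd, hde, hea, hab.symm, hbc.symm, hcd.symm, hde.symm, hea.symm,
        hac.2, had.2, hbd.2, hbe.2, hce.2, mt L.adj_symm hac.2, mt L.adj_symm had.2,
        mt L.adj_symm hbd.2, mt L.adj_symm hbe.2, mt L.adj_symm hce.2] <;> decide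
  have hinj : Function.Injective ![a, b, c, d, e] := by
    intro i j hij
    fin_cases i <;> fin_cases j <;>
      simp_all [hab.ne, hbc.ne, hcd.ne, hde.ne, hea.ne, hac.ne, had.ne, hbd.ne, hbe.ne, hce.ne,
        hab.ne', hbc.ne', hcd.ne', hde.ne', hea.ne', hac.ne', had.ne', hbd.ne', hbe.ne', hce.ne']
  exact fun hch => (hch 5 (by norm_num)).false ⟨⟨_, hinj⟩, hadj _ _⟩

lemma not_adj_of_four_le_egirth (hg : 4 ≤ K.egirth) (hab : K.Adj a b) (hbc : K.Adj b c) :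
    ¬ K.Adj a c := by
  intro hac
  have := le_egirth.mp hg a (.cons hab (.cons hbc (.cons hac.symm .nil))) (by
    simp [Walk.isCycle_def, hab.ne, hbc.ne, hac.ne, hab.ne', hac.ne', Sym2.eq])
  simp only [Walk.length_cons, Walk.length_nil] at this
  exact absurd this (by decide)

lemma not_adj_of_five_le_egirth (hg : 5 ≤ K.egirth) (hab : K.Adj a b) (hbc : K.Adj b c)
    (hcd : K.Adj c d) (hac : a ≠ c) (hbd : b ≠ d) : ¬ K.Adj d a := by
  intro hda
  have := le_egirth.mp hg a (.cons hab (.cons hbc (.cons hcd (.cons hda .nil)))) (by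
    simp [Walk.isCycle_def, hab.ne, hbc.ne, hcd.ne, hda.ne, hab.ne', hda.ne', hac, hbd,
      hac.symm, Sym2.eq])
  simp only [Walk.length_cons, Walk.length_nil] at this
  exact absurd this (by decide)

lemma cross_adj_of_chordal_compl (hch : Chordal Kᶜ) (hab : K.Adj a b) (hcd : K.Adj c d)
    (hac : a ≠ c) (had : a ≠ d) (hbc : b ≠ c) (hbd : b ≠ d) :
    K.Adj a c ∨ K.Adj a d ∨ K.Adj b c ∨ K.Adj b d := by
  by_contra! h
  refine not_chordal_of_cycle4 (L := Kᶜ) ⟨hac, h.1⟩ ⟨hbc.symm, mt K.adj_symm h.2.2.1⟩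
    ⟨hbd, h.2.2.2⟩ ⟨had.symm, mt K.adj_symm h.2.1⟩ (by simpa using hab) (by simpa using hcd) hch

lemma not_adj_of_chordal_compl (hg : 4 ≤ K.egirth) (hch : Chordal Kᶜ) (hab : K.Adj a b)
    (hbc : K.Adj b c) (hcd : K.Adj c d) (hde : K.Adj d e) (hac : a ≠ c) (hbd : b ≠ d)
    (hce : c ≠ e) : ¬ K.Adj e a := by
  intro hea
  have hda : d ≠ a := fun h => not_adj_of_four_le_egirth hg hab hbc (h ▸ hcd).symm
  have heb : e ≠ b := fun h => not_adj_of_four_le_egirth hg hbc hcd (h ▸ hde).symm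
  -- `C₅` is self-complementary: `a c e b d` is an induced cycle of `Kᶜ`.
  refine not_chordal_of_cycle5 (L := Kᶜ) (a := a) (b := c) (c := e) (d := b) (e := d)
    ⟨hac, not_adj_of_four_le_egirth hg hab hbc⟩ ⟨hce, not_adj_of_four_le_egirth hg hcd hde⟩
    ⟨heb, not_adj_of_four_le_egirth hg hea hab⟩ ⟨hbd, not_adj_of_four_le_egirth hg hbc hcd⟩
    ⟨hda, not_adj_of_four_le_egirth hg hde hea⟩ (by simpa using hea.symm) (by simpa using hab)
    (by simpa using hbc.symm) (by simpa using hcd) (by simpa using hde.symm) hch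

lemma false_of_five_vertex_path (hg : 5 ≤ K.egirth) (hch : Chordal Kᶜ) (hab : K.Adj a b)
    (hbc : K.Adj b c) (hcd : K.Adj c d) (hde : K.Adj d e) (hac : a ≠ c) (hbd : b ≠ d)
    (hce : c ≠ e) : False := by
  have hg4 : 4 ≤ K.egirth := le_trans (by norm_num) hg
  have had : a ≠ d := fun h => not_adj_of_four_le_egirth hg4 hab hbc (h ▸ hcd).symm
  have hbe : b ≠ e := fun h => not_adj_of_four_le_egirth hg4 hbc hcd (h ▸ hde).symm
  have hae : a ≠ e := fun h => not_adj_of_five_le_egirth hg hab hbc hcd hac hbd (h ▸ hde)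
  rcases cross_adj_of_chordal_compl hch hab hde had hae hbd hbe with h | h | h | h
  · exact not_adj_of_five_le_egirth hg hab hbc hcd hac hbd h.symm
  · exact not_adj_of_chordal_compl hg4 hch hab hbc hcd hde hac hbd hce h.symm
  · exact not_adj_of_four_le_egirth hg4 hbc hcd h
  · exact not_adj_of_five_le_egirth hg hbc hcd hde hbd hce h.symm

lemma isVertexCover_of_adj_of_adj_of_adj (hg : 5 ≤ K.egirth) (hch : Chordal Kᶜ) {w x y z : W}
    (hwx : K.Adj w x) (hxy : K.Adj x y) (hyz : K.Adj y z) (hwy : w ≠ y) (hxz : x ≠ z) :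
    IsVertexCover K {x, y} := by
  intro a b hab
  by_contra! h
  simp only [Set.mem_insert_iff, Set.mem_singleton_iff, not_or] at h
  obtain ⟨⟨hax, hay⟩, hbx, hby⟩ := h
  rcases cross_adj_of_chordal_compl hch hxy hab (Ne.symm hax) (Ne.symm hbx) (Ne.symm hay)
    (Ne.symm hby) with h | h | h | h
  · exact false_of_five_vertex_path hg hch hyz.symm hxy.symm h hab hxz.symm (Ne.symm hay)
      (Ne.symm hbx)
  · exact false_of_five_vertex_path hg hch hyz.symm hxy.symm h hab.symm hxz.symm (Ne.symm hby)
      (Ne.symm hax)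
  · exact false_of_five_vertex_path hg hch hwx hxy h hab hwy (Ne.symm hax) (Ne.symm hby)
  · exact false_of_five_vertex_path hg hch hwx hxy h hab.symm hwy (Ne.symm hbx) (Ne.symm hay)

theorem exists_isVertexCover_pair_of_chordal_compl (hg : 5 ≤ K.egirth) (hch : Chordal Kᶜ)
    {u v : W} (huv : K.Adj u v) : ∃ x y, K.Adj x y ∧ IsVertexCover K {x, y} := by
  by_cases hcov : IsVertexCover K {u, v}
  · exact ⟨u, v, huv, hcov⟩
  simp only [IsVertexCover, not_forall, Set.mem_insert_iff, Set.mem_singleton_iff, not_or]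
    at hcov
  obtain ⟨p, q, hpq, ⟨hpu, hpv⟩, hqu, hqv⟩ := hcov
  rcases cross_adj_of_chordal_compl hch huv hpq (Ne.symm hpu) (Ne.symm hqu) (Ne.symm hpv)
    (Ne.symm hqv) with h | h | h | h
  · exact ⟨u, p, h, isVertexCover_of_adj_of_adj_of_adj hg hch huv.symm h hpq (Ne.symm hpv)
      (Ne.symm hqu)⟩
  · exact ⟨u, q, h, isVertexCover_of_adj_of_adj_of_adj hg hch huv.symm h hpq.symm
      (Ne.symm hqv) (Ne.symm hpu)⟩
  · exact ⟨v, p, h, isVertexCover_of_adj_of_adj_of_adj hg hch huv h hpq (Ne.symm hpu)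
      (Ne.symm hqv)⟩
  · exact ⟨v, q, h, isVertexCover_of_adj_of_adj_of_adj hg hch huv h hpq.symm (Ne.symm hqu)
      (Ne.symm hpv)⟩

lemma cycleGraph_adj_of_val_add_one {n : ℕ} {i j : Fin n} (h : i.val + 1 = j.val) :
    (cycleGraph n).Adj i j := by
  rw [cycleGraph_adj']
  right
  rw [Fin.sub_val_of_le (Fin.le_def.mpr (by omega))]
  omega

lemma cycleGraph_not_adj_of_le {n : ℕ} {i j : Fin n} (h₁ : i.val + 2 ≤ j.val)
    (h₂ : j.val + 2 ≤ i.val + n) : ¬ (cycleGraph n).Adj i j := by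
  rw [cycleGraph_adj', Fin.coe_sub_iff_lt.mpr (Fin.lt_def.mpr (by omega)),
    Fin.sub_val_of_le (Fin.le_def.mpr (by omega))]
  omega

lemma two_lt_ncard_of_isVertexCover_compl_cycleGraph {n : ℕ} (hn : 4 ≤ n) {S : Set (Fin n)}
    (hcov : IsVertexCover (cycleGraph n)ᶜ S) (hind : IsIndep (cycleGraph n) S) :
    2 < S.ncard := by
  have hcov' : ∀ i j (hi : i < n) (hj : j < n), i + 2 ≤ j → j + 2 ≤ i + n →
      ⟨i, hi⟩ ∈ S ∨ ⟨j, hj⟩ ∈ S :=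
    fun i j _ _ h₁ h₂ => hcov ⟨fun h => by simp [Fin.ext_iff] at h; omega,
      cycleGraph_not_adj_of_le h₁ h₂⟩
  have hind' : ∀ i (hi : i < n) (hj : i + 1 < n), ⟨i, hi⟩ ∈ S → ⟨i + 1, hj⟩ ∉ S :=
    fun i _ _ hi hj => hind hi hj (cycleGraph_adj_of_val_add_one rfl)
  -- `0, 2` and `1, 3` are non-adjacent pairs, so `S` meets both; as no two members of `S` are
  -- consecutive this forces `0, 3 ∈ S`, hence `n ≥ 5`, and then `1` or `4` is a third member.
  rw [Set.two_lt_ncard_iff]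
  obtain ⟨m, rfl⟩ : ∃ m, n = m + 4 := ⟨n - 4, by omega⟩
  rcases hcov' 0 2 (by omega) (by omega) (by omega) (by omega) with h0 | h2 <;>
    rcases hcov' 1 3 (by omega) (by omega) (by omega) (by omega) with h1 | h3
  · exact (hind' 0 _ _ h0 h1).elim
  · rcases m with _ | m
    · exact (hind h3 h0 (Or.inr rfl)).elim
    rcases hcov' 1 4 (by omega) (by omega) (by omega) (by omega) with h1 | h4
    · exact ⟨_, _, _, h0, h1, h3, by simp, by simp, by simp⟩
    · exact ⟨_, _, _, h0, h3, h4, by simp, by simp, by simp⟩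
  · exact (hind' 1 _ _ h1 h2).elim
  · exact (hind' 2 _ _ h2 h3).elim

theorem chordal_compl_of_isVertexCover_pair {u v : W} (huv : K.Adj u v)
    (hcov : IsVertexCover K {u, v}) : Chordal Kᶜ := by
  refine fun n hn => ⟨fun f => ?_⟩
  have hcovS : IsVertexCover (cycleGraph n)ᶜ (f ⁻¹' {u, v}) := fun i j hij =>
    hcov (not_not.mp fun h => hij.2 (f.map_rel_iff.mp ⟨f.injective.ne hij.1, h⟩))
  have hindS : IsIndep (cycleGraph n) (f ⁻¹' {u, v}) := by
    intro i hi j hj hij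
    have hf := f.map_rel_iff.mpr hij
    simp only [Set.mem_preimage, Set.mem_insert_iff, Set.mem_singleton_iff] at hi hj
    rcases hi with hi | hi <;> rcases hj with hj | hj <;> rw [hi, hj] at hf
    exacts [hf.ne rfl, hf.2 huv, hf.2 huv.symm, hf.ne rfl]
  have hcard : (f ⁻¹' {u, v}).ncard ≤ 2 := by
    calc (f ⁻¹' {u, v}).ncard ≤ ({u, v} : Set W).ncard :=
          Set.ncard_le_ncard_of_injOn f (fun _ h => h) f.injective.injOn
      _ = 2 := Set.ncard_pair huv.ne
  have := two_lt_ncard_of_isVertexCover_compl_cycleGraph hn hcovS hindS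
  omega

end Cochordal

variable {G : SimpleGraph V}

def edgeStar (G : SimpleGraph V) (e : Sym2 V) : G.Subgraph where
  verts := Set.univ
  Adj a b := G.Adj a b ∧ (a ∈ e ∨ b ∈ e)
  adj_sub h := h.1
  edge_vert _ := Set.mem_univ _
  symm := ⟨fun _ _ h => ⟨h.1.symm, h.2.symm⟩⟩

@[simp]
lemma edgeStar_adj {e : Sym2 V} {a b : V} :
    (G.edgeStar e).Adj a b ↔ G.Adj a b ∧ (a ∈ e ∨ b ∈ e) := Iff.rfl

lemma mem_edgeSet_edgeStar {e f : Sym2 V} (hf : f ∈ G.edgeSet) {w : V} (hwe : w ∈ e)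
    (hwf : w ∈ f) : f ∈ (G.edgeStar e).edgeSet := by
  induction f using Sym2.ind with
  | _ a b =>
    refine edgeStar_adj.mpr ⟨hf, ?_⟩
    rcases Sym2.mem_iff.mp hwf with rfl | rfl
    exacts [Or.inl hwe, Or.inr hwe]

lemma chordal_compl_coe_edgeStar {e : Sym2 V} (he : e ∈ G.edgeSet) :
    Chordal (G.edgeStar e).coeᶜ := by
  induction e using Sym2.ind with
  | _ u v =>
    refine chordal_compl_of_isVertexCover_pair (u := ⟨u, Set.mem_univ u⟩)
      (v := ⟨v, Set.mem_univ v⟩) ⟨he, Or.inl (Sym2.mem_mk_left u v)⟩ fun a b hab => ?_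
    simp only [Set.mem_insert_iff, Set.mem_singleton_iff, Subtype.ext_iff]
    rcases (edgeStar_adj.mp hab).2 with h | h <;> rcases Sym2.mem_iff.mp h with h | h <;> simp [h]

lemma eq_or_lineGraph_adj_of_mem {d f : G.edgeSet} {w : V} (hd : w ∈ d.1) (hf : w ∈ f.1) :
    d = f ∨ G.lineGraph.Adj d f := by
  by_cases h : d = f
  · exact Or.inl h
  · exact Or.inr (lineGraph_adj_iff_exists.mpr ⟨h, w, hd, hf⟩)

lemma exists_dominating_edge_of_chordal_compl (hg : 5 ≤ G.egirth) {H : G.Subgraph}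
    (hch : Chordal H.coeᶜ) : ∃ D : Finset G.edgeSet, D.card ≤ 1 ∧
      ∀ f : G.edgeSet, f.1 ∈ H.edgeSet → f ∈ D ∨ ∃ d ∈ D, G.lineGraph.Adj d f := by
  by_cases hH : ∃ p q, H.Adj p q
  · obtain ⟨p, q, hpq⟩ := hH
    obtain ⟨x, y, hxy, hcov⟩ := exists_isVertexCover_pair_of_chordal_compl
      (H.coe_isContained.egirth_le.trans' hg) hch
      (u := ⟨p, hpq.fst_mem⟩) (v := ⟨q, hpq.snd_mem⟩) hpq
    refine ⟨{⟨s(x.1, y.1), hxy.adj_sub⟩}, (Finset.card_singleton _).le, fun ⟨f, hf⟩ hfH => ?_⟩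
    induction f using Sym2.ind with
    | _ a b =>
      have hab : H.Adj a b := hfH
      obtain ⟨w, hwd, hwf⟩ : ∃ w, w ∈ s(x.1, y.1) ∧ w ∈ s(a, b) := by
        rcases hcov (show H.coe.Adj ⟨a, hab.fst_mem⟩ ⟨b, hab.snd_mem⟩ from hab) with h | h <;>
          simp only [Set.mem_insert_iff, Set.mem_singleton_iff, Subtype.ext_iff] at h
        · exact ⟨a, by rcases h with h | h <;> simp [h], Sym2.mem_mk_left a b⟩
        · exact ⟨b, by rcases h with h | h <;> simp [h], Sym2.mem_mk_right a b⟩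
      simpa using (eq_or_lineGraph_adj_of_mem hwd hwf).imp_left Eq.symm
  · refine ⟨∅, by simp, fun ⟨f, _⟩ hfH => ?_⟩
    induction f using Sym2.ind with
    | _ a b => exact (hH ⟨a, b, hfH⟩).elim

def IsCochordalCover {ι : Type*} (G : SimpleGraph V) (H : ι → G.Subgraph) : Prop :=
  (∀ i, Chordal (H i).coeᶜ) ∧ ∀ e ∈ G.edgeSet, ∃ i, e ∈ (H i).edgeSet

def IsDominating {W : Type*} (K : SimpleGraph W) (D : Finset W) : Prop :=
  ∀ v, v ∈ D ∨ ∃ u ∈ D, K.Adj u v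

section Cover

variable {ι κ : Type*} {H : ι → G.Subgraph}

lemma IsCochordalCover.comp_equiv (hH : IsCochordalCover G H) (σ : κ ≃ ι) :
    IsCochordalCover G (H ∘ σ) := by
  refine ⟨fun k => hH.1 (σ k), fun e he => ?_⟩
  obtain ⟨i, hi⟩ := hH.2 e he
  exact ⟨σ.symm i, by simpa using hi⟩

lemma IsCochordalCover.cochord_le_card [Fintype ι] (hH : IsCochordalCover G H) :
    cochord G ≤ Fintype.card ι := by
  apply Nat.sInf_le
  exact ⟨_, hH.comp_equiv (Fintype.equivFin ι).symm⟩

lemma IsCochordalCover.exists_fin_cochord [Fintype ι] (hH : IsCochordalCover G H) :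
    ∃ H' : Fin (cochord G) → G.Subgraph, IsCochordalCover G H' := by
  show cochord G ∈ {k | ∃ H : Fin k → G.Subgraph, IsCochordalCover G H}
  exact Nat.sInf_mem ⟨_, _, hH.comp_equiv (Fintype.equivFin ι).symm⟩

lemma isCochordalCover_edgeStar {D : Finset G.edgeSet} (hD : IsDominating G.lineGraph D) :
    IsCochordalCover G fun d : D => G.edgeStar d.1.1 := by
  refine ⟨fun d => chordal_compl_coe_edgeStar d.1.2, fun e he => ?_⟩
  rcases hD ⟨e, he⟩ with h | ⟨d, hd, hde⟩
  · exact ⟨⟨_, h⟩, mem_edgeSet_edgeStar he e.out_fst_mem e.out_fst_mem⟩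
  · obtain ⟨-, w, hwd, hwe⟩ := lineGraph_adj_iff_exists.mp hde
    exact ⟨⟨d, hd⟩, mem_edgeSet_edgeStar he hwd hwe⟩

lemma IsCochordalCover.exists_isDominating_lineGraph (hg : 5 ≤ G.egirth) [Fintype ι]
    (hH : IsCochordalCover G H) :
    ∃ D : Finset G.edgeSet, IsDominating G.lineGraph D ∧ D.card ≤ Fintype.card ι := by
  classical
  choose D hcard hD using fun i => exists_dominating_edge_of_chordal_compl hg (hH.1 i)
  refine ⟨Finset.univ.biUnion D, fun f => ?_, ?_⟩
  · obtain ⟨i, hi⟩ := hH.2 f.1 f.2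
    rcases hD i f hi with h | ⟨d, hd, hdf⟩
    · exact Or.inl (Finset.mem_biUnion.mpr ⟨i, Finset.mem_univ _, h⟩)
    · exact Or.inr ⟨d, Finset.mem_biUnion.mpr ⟨i, Finset.mem_univ _, hd⟩, hdf⟩
  · calc (Finset.univ.biUnion D).card ≤ ∑ i, (D i).card := Finset.card_biUnion_le
      _ ≤ ∑ _i : ι, 1 := Finset.sum_le_sum fun i _ => hcard i
      _ = Fintype.card ι := by simp

end Cover

lemma IsDominating.domNum_le_card {W : Type*} {K : SimpleGraph W} {D : Finset W}
    (hD : IsDominating K D) : domNum K ≤ D.card := by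
  apply Nat.sInf_le
  exact ⟨D, hD, rfl⟩

lemma exists_isDominating_card_eq_domNum {W : Type*} [Finite W] (K : SimpleGraph W) :
    ∃ D, IsDominating K D ∧ D.card = domNum K := by
  have := Fintype.ofFinite W
  show domNum K ∈ {n | ∃ D : Finset W, IsDominating K D ∧ D.card = n}
  exact Nat.sInf_mem ⟨_, Finset.univ, fun v => Or.inl (Finset.mem_univ v), rfl⟩

end SimpleGraph

theorem cochord_eq_domNum_lineGraph_general [Fintype V] (G : SimpleGraph V)
    (hg : 5 ≤ G.egirth) :
    cochord G = domNum G.lineGraph := by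
  obtain ⟨D, hD, hDcard⟩ := exists_isDominating_card_eq_domNum G.lineGraph
  have hstar := isCochordalCover_edgeStar hD
  obtain ⟨H, hH⟩ := hstar.exists_fin_cochord
  obtain ⟨D', hD', hD'card⟩ := hH.exists_isDominating_lineGraph hg
  refine le_antisymm ?_ ?_
  · calc cochord G ≤ Fintype.card D := hstar.cochord_le_card
      _ = domNum G.lineGraph := by rw [Fintype.card_coe, hDcard]
  · calc domNum G.lineGraph ≤ D'.card := hD'.domNum_le_card
      _ ≤ cochord G := by simpa using hD'card

/-- for a connected graph of girth at least `5`,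
`cochord(G) = γ(L(G))`. -/
theorem cochord_eq_domNum_lineGraph [Fintype V] (G : SimpleGraph V)
    (hconn : G.Connected) (hne : G.edgeSet.Nonempty) (hg : 5 ≤ G.egirth) :
    cochord G = domNum G.lineGraph :=
  cochord_eq_domNum_lineGraph_general G hg
end
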